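/- arXiv:2603.12164 — 7 statements merged into one kernel-verified Lean document; each statement's English description precedes it below -/
import Mathlib

section
/- Let μ > 1 be real and let ζ be a complex number. Then the integral ∫₀^∞ e^{-t} L(ζt; μ) dt converges and equals L(ζ; μ−1); that is, the integral Borel transform of the Le Roy function of parameter μ is the Le Roy function of parameter μ−1. -/
open MeasureTheory Set

/-- The Le Roy function `L(ζ; μ) = ∑_{r=0}^∞ ζ^r / Γ(1+r)^μ`. -/
noncomputable def leRoy (μ : ℝ) (ζ : ℂ) : ℂ :=
  ∑' r : ℕ, ζ ^ r / ((Real.Gamma (1 + (r : ℝ)) ^ μ : ℝ) : ℂ)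

open Filter in
lemma summable_pow_div_factorial_rpow {ν : ℝ} (hν : 0 < ν) {a : ℝ} (ha : 0 ≤ a) :
    Summable fun r : ℕ => a ^ r / ((r.factorial : ℝ)) ^ ν := by
  rcases ha.eq_or_lt.imp Eq.symm id with h0 | h0
  · apply summable_of_ne_finset_zero (s := {0})
    intro r hr
    simp only [Finset.mem_singleton] at hr
    rw [h0, zero_pow hr, zero_div]
  · set f : ℕ → ℝ := fun r => a ^ r / ((r.factorial : ℝ)) ^ ν with hf
    have hfpos : ∀ r, 0 < f r := by
      intro r
      have : (0:ℝ) < (r.factorial : ℝ) := by exact_mod_cast r.factorial_pos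
      positivity
    apply summable_of_ratio_test_tendsto_lt_one (l := 0) one_pos
      (Eventually.of_forall fun n => (hfpos n).ne')
    have key : ∀ n : ℕ, ‖f (n + 1)‖ / ‖f n‖ = a / ((n : ℝ) + 1) ^ ν := by
      intro n
      have h1 : (0:ℝ) < (n.factorial : ℝ) := by exact_mod_cast n.factorial_pos
      have h2 : (0:ℝ) < ((n:ℝ) + 1) := by positivity
      rw [Real.norm_of_nonneg (hfpos _).le, Real.norm_of_nonneg (hfpos _).le, hf]
      simp only [Nat.factorial_succ, Nat.cast_mul, Nat.cast_add, Nat.cast_one, pow_succ]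
      rw [Real.mul_rpow (by positivity) h1.le]
      have h3 : ((n:ℝ) + 1) ^ ν ≠ 0 := by positivity
      have h4 : (n.factorial : ℝ) ^ ν ≠ 0 := by positivity
      field_simp
    rw [tendsto_congr key]
    exact Tendsto.div_atTop tendsto_const_nhds <|
      (tendsto_rpow_atTop hν).comp <|
        tendsto_atTop_add_const_right _ 1 tendsto_natCast_atTop_atTop

lemma gamma_one_add_nat (r : ℕ) : Real.Gamma (1 + (r : ℝ)) = r.factorial := by
  rw [add_comm]; exact Real.Gamma_nat_eq_factorial r

/-- The integral Borel transform of the Le Roy function of parameter `μ > 1`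
converges and equals the Le Roy function of parameter `μ - 1`. -/
theorem leRoy_borel_transform (μ : ℝ) (hμ : 1 < μ) (ζ : ℂ) :
    IntegrableOn (fun t : ℝ => Real.exp (-t) • leRoy μ (ζ * (t : ℂ))) (Ioi 0) ∧
      ∫ t in Ioi (0 : ℝ), Real.exp (-t) • leRoy μ (ζ * (t : ℂ)) = leRoy (μ - 1) ζ := by
  set f : ℕ → ℝ → ℂ := fun r t =>
    (ζ ^ r / ((r.factorial : ℝ) ^ μ : ℝ)) * ((Real.exp (-t) * t ^ r : ℝ) : ℂ) with hfdef
  have factpos : ∀ r : ℕ, (0:ℝ) < (r.factorial : ℝ) := fun r => by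
    exact_mod_cast r.factorial_pos
  -- Step A : pointwise identity
  have stepA : ∀ t : ℝ, Real.exp (-t) • leRoy μ (ζ * (t : ℂ)) = ∑' r, f r t := by
    intro t
    rw [leRoy, Complex.real_smul, ← tsum_mul_left]
    congr 1; ext r
    rw [hfdef]
    simp only [gamma_one_add_nat, mul_pow]
    push_cast
    ring
  -- Step B : integrability of each term
  have base : ∀ r : ℕ, IntegrableOn (fun t : ℝ => Real.exp (-t) * t ^ r) (Ioi 0) := by
    intro r
    have h := Real.GammaIntegral_convergent (s := (r : ℝ) + 1) (by positivity)
    simpa [Real.rpow_natCast] using h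
  have stepB : ∀ r : ℕ, IntegrableOn (f r) (Ioi 0) := fun r =>
    ((base r).ofReal.const_mul _)
  -- value of the Gamma-type integral
  have hint : ∀ r : ℕ, ∫ t in Ioi (0:ℝ), Real.exp (-t) * t ^ r = (r.factorial : ℝ) := by
    intro r
    rw [← Real.Gamma_nat_eq_factorial, Real.Gamma_eq_integral (by positivity : (0:ℝ) < r + 1)]
    simp [Real.rpow_natCast]
  -- Step C : integral of each term
  have stepC : ∀ r : ℕ, ∫ t in Ioi (0:ℝ), f r t
      = ζ ^ r / (((r.factorial : ℝ) ^ (μ - 1) : ℝ) : ℂ) := by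
    intro r
    have hC : (∫ a in Ioi (0:ℝ), ((Real.exp (-a) * a ^ r : ℝ) : ℂ))
        = ((r.factorial : ℝ) : ℂ) := by
      have hco : ∀ x : ℝ, ((x : ℂ)) = @RCLike.ofReal ℂ _ x := fun _ => rfl
      simp only [hco]
      rw [_root_.integral_ofReal, hint r]
    rw [hfdef]
    simp only
    rw [MeasureTheory.integral_const_mul, hC]
    have h1 : ((r.factorial : ℝ)) ^ (μ - 1) = (r.factorial : ℝ) ^ μ / (r.factorial : ℝ) := by
      rw [Real.rpow_sub (factpos r), Real.rpow_one]
    rw [h1]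
    have h2 : ((r.factorial : ℝ) : ℂ) ≠ 0 := by
      exact_mod_cast (factpos r).ne'
    have h3 : (((r.factorial : ℝ) ^ μ : ℝ) : ℂ) ≠ 0 := by
      have : (0:ℝ) < (r.factorial : ℝ) ^ μ := Real.rpow_pos_of_pos (factpos r) μ
      exact_mod_cast this.ne'
    push_cast
    field_simp
  -- Step D : norm integrals
  have normval : ∀ r : ℕ, ∫ t in Ioi (0:ℝ), ‖f r t‖
      = ‖ζ‖ ^ r / ((r.factorial : ℝ)) ^ (μ - 1) := by
    intro r
    have hcong : ∀ t ∈ Ioi (0:ℝ), ‖f r t‖ =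
        (‖ζ‖ ^ r / (r.factorial : ℝ) ^ μ) * (Real.exp (-t) * t ^ r) := by
      intro t ht
      rw [hfdef]
      simp only [norm_mul, norm_div, norm_pow, Complex.norm_real, Real.norm_eq_abs]
      rw [abs_of_pos (Real.rpow_pos_of_pos (factpos r) μ),
        abs_of_pos (Real.exp_pos _), abs_of_pos (mem_Ioi.mp ht)]
    rw [setIntegral_congr_fun measurableSet_Ioi hcong,
      MeasureTheory.integral_const_mul, hint r]
    rw [Real.rpow_sub (factpos r), Real.rpow_one]
    field_simp
  have hsummable : Summable fun r : ℕ => ‖ζ‖ ^ r / ((r.factorial : ℝ)) ^ (μ - 1) :=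
    summable_pow_div_factorial_rpow (by linarith) (norm_nonneg ζ)
  -- Tonelli bound
  have hlint : ∑' r : ℕ, ∫⁻ t in Ioi (0:ℝ), ‖f r t‖₊ ≠ ⊤ := by
    have heq : ∀ r : ℕ, ∫⁻ t in Ioi (0:ℝ), (‖f r t‖₊ : ENNReal) =
        ENNReal.ofReal (‖ζ‖ ^ r / ((r.factorial : ℝ)) ^ (μ - 1)) := by
      intro r
      change ∫⁻ t in Ioi (0:ℝ), ‖f r t‖ₑ = _
      rw [← ofReal_integral_norm_eq_lintegral_enorm (stepB r), normval r]
    rw [funext heq, ← ENNReal.ofReal_tsum_of_nonneg (fun r => by positivity) hsummable]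
    exact ENNReal.ofReal_ne_top
  -- pointwise summability of norms
  have hsumt : ∀ t : ℝ, Summable fun r : ℕ => ‖f r t‖ := by
    intro t
    have hle : ∀ r : ℕ, ‖f r t‖ ≤ Real.exp (-t) * ((‖ζ‖ * |t|) ^ r / (r.factorial : ℝ) ^ μ) := by
      intro r
      rw [hfdef]
      simp only [norm_mul, norm_div, norm_pow, Complex.norm_real, Real.norm_eq_abs]
      rw [abs_of_pos (Real.rpow_pos_of_pos (factpos r) μ), abs_of_pos (Real.exp_pos _),
        mul_pow]
      exact le_of_eq (by ring)
    have h2 : Summable fun r : ℕ => (‖ζ‖ * |t|) ^ r / (r.factorial : ℝ) ^ μ :=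
      summable_pow_div_factorial_rpow (by linarith) (by positivity)
    exact Summable.of_nonneg_of_le (fun r => norm_nonneg _) hle (h2.mul_left _)
  have hsummt : ∀ t : ℝ, Summable fun r : ℕ => f r t := fun t => (hsumt t).of_norm
  -- measurability of the sum
  have hmeas : AEStronglyMeasurable (fun t : ℝ => ∑' r, f r t) (volume.restrict (Ioi 0)) := by
    refine (stronglyMeasurable_of_tendsto (f := fun n : ℕ => fun t => ∑ r ∈ Finset.range n, f r t)
      Filter.atTop (fun n => ?_) ?_).aestronglyMeasurable
    · refine Finset.stronglyMeasurable_fun_sum _ fun r _ => ?_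
      exact (continuous_const.mul (Complex.continuous_ofReal.comp
        ((Real.continuous_exp.comp continuous_neg).mul (continuous_pow r)))).stronglyMeasurable
    · rw [tendsto_pi_nhds]
      intro t
      exact (hsummt t).hasSum.tendsto_sum_nat
  -- finite integral of the sum
  have hFin : IntegrableOn (fun t : ℝ => ∑' r, f r t) (Ioi 0) := by
    refine ⟨hmeas, ?_⟩
    have key : ∫⁻ t in Ioi (0:ℝ), ‖∑' r, f r t‖₊ < ⊤ := by
      calc ∫⁻ t in Ioi (0:ℝ), (‖∑' r, f r t‖₊ : ENNReal)
          ≤ ∫⁻ t in Ioi (0:ℝ), ∑' r, (‖f r t‖₊ : ENNReal) := by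
            apply lintegral_mono
            intro t
            have h1 : Summable fun r : ℕ => ‖f r t‖₊ := by
              rw [← NNReal.summable_coe]
              simpa [coe_nnnorm] using hsumt t
            calc ((‖∑' r, f r t‖₊ : NNReal) : ENNReal)
                ≤ ((∑' r, ‖f r t‖₊ : NNReal) : ENNReal) :=
                  ENNReal.coe_le_coe.mpr (nnnorm_tsum_le h1)
              _ = ∑' r, (‖f r t‖₊ : ENNReal) := ENNReal.coe_tsum h1
        _ = ∑' r, ∫⁻ t in Ioi (0:ℝ), (‖f r t‖₊ : ENNReal) :=
            lintegral_tsum fun r => (stepB r).aestronglyMeasurable.enorm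
        _ < ⊤ := lt_top_iff_ne_top.mpr hlint
    exact key
  constructor
  · apply hFin.congr_fun (fun t _ => (stepA t).symm) measurableSet_Ioi
  · calc ∫ t in Ioi (0:ℝ), Real.exp (-t) • leRoy μ (ζ * (t : ℂ))
        = ∫ t in Ioi (0:ℝ), ∑' r, f r t :=
          setIntegral_congr_fun measurableSet_Ioi fun t _ => stepA t
      _ = ∑' r, ∫ t in Ioi (0:ℝ), f r t :=
          MeasureTheory.integral_tsum (fun r => (stepB r).aestronglyMeasurable) hlint
      _ = leRoy (μ - 1) ζ := by
          rw [leRoy]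
          congr 1; ext r
          rw [stepC r, gamma_one_add_nat]
end

section
/- Let 0 < α < 1, β ≥ 0, μ ≥ 1 be real numbers and let ζ be a complex number. Then ∫₀^∞ e^{-t} t^β L(ζ t^α; α, β, μ) dt = L(ζ; α, β, μ−1), i.e. the Borel–Le Roy transform lowers the parameter μ of the generalised Le Roy function by one. -/
open MeasureTheory Set

lemma exp_neg_one_le_Gamma {x : ℝ} (hx : 1 ≤ x) : Real.exp (-1) ≤ Real.Gamma x := by
  have hx0 : 0 < x := lt_of_lt_of_le one_pos hx
  have hint : IntegrableOn (fun t : ℝ => Real.exp (-t) * t ^ (x - 1)) (Ioi 0) :=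
    Real.GammaIntegral_convergent hx0
  rw [Real.Gamma_eq_integral hx0]
  calc Real.exp (-1) = ∫ t in Ioi (1:ℝ), Real.exp (-t) := (integral_exp_neg_Ioi 1).symm
    _ ≤ ∫ t in Ioi (1:ℝ), Real.exp (-t) * t ^ (x-1) := by
        refine setIntegral_mono_on ?_ (hint.mono_set (Ioi_subset_Ioi zero_le_one))
          measurableSet_Ioi ?_
        · have := exp_neg_integrableOn_Ioi 1 (one_pos (α := ℝ))
          simpa using this
        · intro t ht
          have h1 : (1:ℝ) ≤ t ^ (x-1) := Real.one_le_rpow (le_of_lt ht) (by linarith)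
          nlinarith [Real.exp_pos (-t)]
    _ ≤ ∫ t in Ioi (0:ℝ), Real.exp (-t) * t ^ (x-1) := by
        refine setIntegral_mono_set hint ?_ ?_
        · filter_upwards [ae_restrict_mem measurableSet_Ioi] with t ht
          rw [mem_Ioi] at ht
          positivity
        · exact HasSubset.Subset.eventuallyLE (Ioi_subset_Ioi zero_le_one)

lemma Gamma_interp {x y θ : ℝ} (hx : 0 < x) (hy : 0 < y) (hθ0 : 0 ≤ θ) (hθ1 : θ ≤ 1) :
    Real.Gamma ((1-θ) * x + θ * y) ≤ Real.Gamma x ^ (1-θ) * Real.Gamma y ^ θ := by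
  have h := Real.convexOn_log_Gamma.2 (mem_Ioi.2 hx) (mem_Ioi.2 hy) (by linarith : (0:ℝ) ≤ 1 - θ) hθ0
    (by ring)
  have hz : 0 < (1-θ) * x + θ * y := by
    rcases eq_or_lt_of_le hθ0 with h0 | h0
    · simpa [← h0] using hx
    · nlinarith [mul_nonneg (by linarith : (0:ℝ) ≤ 1-θ) hx.le, mul_pos h0 hy]
  have hgz := Real.Gamma_pos_of_pos hz
  have hgx := Real.Gamma_pos_of_pos hx
  have hgy := Real.Gamma_pos_of_pos hy
  simp only [smul_eq_mul] at h
  have := Real.exp_le_exp.2 h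
  rw [Function.comp_apply, Real.exp_log hgz, Real.exp_add] at this
  calc Real.Gamma ((1-θ)*x + θ*y) ≤ Real.exp ((1-θ) * (Real.log ∘ Real.Gamma) x) *
      Real.exp (θ * (Real.log ∘ Real.Gamma) y) := this
    _ = Real.Gamma x ^ (1-θ) * Real.Gamma y ^ θ := by
        rw [Function.comp_apply, Function.comp_apply,
          Real.rpow_def_of_pos hgx, Real.rpow_def_of_pos hgy, mul_comm (Real.log _),
          mul_comm (Real.log _)]

open Filter in
lemma A_summable (α β x : ℝ) (hα0 : 0 < α) (hα1 : α < 1) (hβ : 0 ≤ β) (hx : 0 ≤ x) :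
    Summable (fun r : ℕ => x ^ r * Real.Gamma (1 + β + r) ^ α / r.factorial) := by
  apply summable_of_ratio_norm_eventually_le (r := 1/2) (by norm_num)
  have hten : Tendsto (fun r : ℕ => x * (1+β) * ((r:ℝ)+1) ^ (α-1)) atTop (nhds 0) := by
    have h1 : Tendsto (fun r : ℕ => ((r:ℝ)+1) ^ (α-1)) atTop (nhds 0) := by
      have := tendsto_rpow_neg_atTop (y := 1-α) (by linarith)
      have h2 : Tendsto (fun r : ℕ => (r:ℝ)+1) atTop atTop :=
        tendsto_atTop_add_const_right _ 1 tendsto_natCast_atTop_atTop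
      have := this.comp h2
      simpa [Function.comp_def, show -(1-α) = α - 1 by ring] using this
    simpa using (h1.const_mul (x * (1+β)))
  filter_upwards [hten.eventually_lt_const (by norm_num : (0:ℝ) < 1/2)] with r hr
  have hGpos : (0:ℝ) < Real.Gamma (1 + β + r) := Real.Gamma_pos_of_pos (by positivity)
  set G := Real.Gamma (1 + β + (r:ℝ)) with hGdef
  have e1 : Real.Gamma (1 + β + ((r:ℕ)+1 : ℕ)) = (1+β+r) * G := by
    push_cast
    rw [show (1:ℝ)+β+((r:ℝ)+1) = (1+β+(r:ℝ))+1 by ring,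
      Real.Gamma_add_one (by positivity)]
  have hrp1 : (0:ℝ) < (r:ℝ) + 1 := by positivity
  have key : x * (1+β+(r:ℝ)) ^ α / ((r:ℝ)+1) ≤ 1/2 := by
    have c1 : (1+β+(r:ℝ)) ^ α ≤ ((1+β) * ((r:ℝ)+1)) ^ α :=
      Real.rpow_le_rpow (by positivity) (by nlinarith) hα0.le
    have c2 : ((1+β) * ((r:ℝ)+1)) ^ α = (1+β)^α * ((r:ℝ)+1)^α :=
      Real.mul_rpow (by positivity) (by positivity)
    have c3 : (1+β:ℝ)^α ≤ (1+β) := by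
      calc (1+β:ℝ)^α ≤ (1+β)^(1:ℝ) :=
        Real.rpow_le_rpow_of_exponent_le (by linarith) hα1.le
      _ = 1+β := Real.rpow_one _
    have c4 : ((r:ℝ)+1)^(α-1) = ((r:ℝ)+1)^α / ((r:ℝ)+1) :=
      Real.rpow_sub_one (ne_of_gt hrp1) α
    have c5 : x * (1+β+(r:ℝ)) ^ α / ((r:ℝ)+1) ≤ x * (1+β) * (((r:ℝ)+1)^α / ((r:ℝ)+1)) := by
      rw [div_le_iff₀ hrp1]
      have h6 : ((r:ℝ)+1)^α / ((r:ℝ)+1) * ((r:ℝ)+1) = ((r:ℝ)+1)^α := by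
        field_simp
      rw [mul_assoc, h6]
      have : (1+β+(r:ℝ)) ^ α ≤ (1+β) * ((r:ℝ)+1)^α := by
        calc (1+β+(r:ℝ)) ^ α ≤ (1+β)^α * ((r:ℝ)+1)^α := by rw [← c2]; exact c1
          _ ≤ (1+β) * ((r:ℝ)+1)^α := by
            apply mul_le_mul_of_nonneg_right c3 (by positivity)
      calc x * (1+β+(r:ℝ)) ^ α ≤ x * ((1+β) * ((r:ℝ)+1)^α) :=
            mul_le_mul_of_nonneg_left this hx
        _ = x * (1+β) * ((r:ℝ)+1)^α := by ring
    calc x * (1+β+(r:ℝ)) ^ α / ((r:ℝ)+1) ≤ x * (1+β) * (((r:ℝ)+1)^α / ((r:ℝ)+1)) := c5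
      _ = x * (1+β) * ((r:ℝ)+1)^(α-1) := by rw [c4]
      _ ≤ 1/2 := hr.le
  rw [Real.norm_of_nonneg (by positivity), Real.norm_of_nonneg (by positivity)]
  rw [e1, Nat.factorial_succ]
  have expand : x ^ (r+1) * ((1+β+(r:ℝ)) * G) ^ α / ((r+1) * r.factorial : ℕ) =
      (x * (1+β+(r:ℝ))^α / ((r:ℝ)+1)) * (x ^ r * G ^ α / r.factorial) := by
    rw [Real.mul_rpow (by positivity) hGpos.le, pow_succ]
    push_cast
    field_simp
  rw [expand]
  apply mul_le_mul_of_nonneg_right key (by positivity)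


/-- The generalised Le Roy function
`L(ζ; α, β, μ) = ∑_{r=0}^∞ ζ^r / (r! · Γ(1+β+αr)^{μ-1})`. -/
noncomputable def genLeRoy (α β μ : ℝ) (ζ : ℂ) : ℂ :=
  ∑' r : ℕ, ζ ^ r /
    (((r.factorial : ℝ) * Real.Gamma (1 + β + α * (r : ℝ)) ^ (μ - 1) : ℝ) : ℂ)

/-- The Borel–Le Roy transform lowers the parameter `μ` of the generalised Le Roy
function by one. -/
theorem genLeRoy_borel_transform (α β μ : ℝ) (hα0 : 0 < α) (hα1 : α < 1)
    (hβ : 0 ≤ β) (hμ : 1 ≤ μ) (ζ : ℂ) :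
    ∫ t in Ioi (0 : ℝ),
        (Real.exp (-t) * t ^ β) • genLeRoy α β μ (ζ * ((t ^ α : ℝ) : ℂ)) =
      genLeRoy α β (μ - 1) ζ := by
  set g : ℕ → ℝ := fun r => Real.Gamma (1 + β + α * r) with hg
  have hgpos : ∀ r : ℕ, 0 < g r := fun r => Real.Gamma_pos_of_pos (by positivity)
  set c : ℕ → ℂ := fun r => ζ ^ r / (((r.factorial : ℝ) * g r ^ (μ - 1) : ℝ) : ℂ) with hc
  set F : ℕ → ℝ → ℂ := fun r t => c r * ((Real.exp (-t) * t ^ (β + α * r) : ℝ) : ℂ) with hF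
  -- pointwise identity
  have hpt : EqOn (fun t : ℝ => (Real.exp (-t) * t ^ β) • genLeRoy α β μ (ζ * ((t ^ α : ℝ) : ℂ)))
      (fun t : ℝ => ∑' r : ℕ, F r t) (Ioi 0) := by
    intro t ht
    rw [mem_Ioi] at ht
    simp only [genLeRoy, Complex.real_smul, ← tsum_mul_left]
    refine tsum_congr fun r => ?_
    have h1 : ((t ^ α : ℝ) : ℂ) ^ r = ((t ^ (α * r) : ℝ) : ℂ) := by
      rw [← Complex.ofReal_pow, ← Real.rpow_natCast (t ^ α) r, ← Real.rpow_mul ht.le]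
    have h2 : t ^ (β + α * r) = t ^ β * t ^ (α * r) := Real.rpow_add ht _ _
    simp only [hF, hc, mul_pow, h1, h2]
    push_cast
    ring
  rw [setIntegral_congr_fun measurableSet_Ioi hpt]
  -- Gamma integral value
  have hgam : ∀ r : ℕ, ∫ t in Ioi (0:ℝ), Real.exp (-t) * t ^ (β + α * r) = g r := by
    intro r
    show _ = Real.Gamma (1 + β + α * r)
    rw [show (1:ℝ) + β + α * r = (β + α * r) + 1 by ring, Real.Gamma_eq_integral (by positivity)]
    simp only [add_sub_cancel_right]
  -- integrability
  have hFint : ∀ r : ℕ, Integrable (F r) (volume.restrict (Ioi 0)) := by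
    intro r
    apply Integrable.const_mul
    have h := Real.GammaIntegral_convergent (s := β + α * r + 1) (by positivity)
    simp only [add_sub_cancel_right] at h
    exact h.ofReal
  -- norm integrals
  have hnorm : (fun r : ℕ => ∫ t in Ioi (0:ℝ), ‖F r t‖) = fun r : ℕ => ‖c r‖ * g r := by
    funext r
    have : EqOn (fun t : ℝ => ‖F r t‖)
        (fun t : ℝ => ‖c r‖ * (Real.exp (-t) * t ^ (β + α * r))) (Ioi 0) := by
      intro t ht
      rw [mem_Ioi] at ht
      simp only [hF, norm_mul, Complex.norm_real, Real.norm_eq_abs, abs_mul]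
      rw [abs_of_nonneg (Real.exp_pos (-t)).le, abs_of_nonneg (Real.rpow_nonneg ht.le _)]
    rw [setIntegral_congr_fun measurableSet_Ioi this, integral_const_mul, hgam r]
  -- summability of norm integrals
  have hcnorm : ∀ r : ℕ, ‖c r‖ = ‖ζ‖ ^ r / (r.factorial * g r ^ (μ - 1)) := by
    intro r
    rw [hc]
    rw [norm_div, norm_pow, Complex.norm_real, Real.norm_eq_abs,
      abs_of_pos (by positivity : (0:ℝ) < r.factorial * g r ^ (μ - 1))]
  have hK : ∀ r : ℕ, ‖c r‖ * g r ≤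
      (Real.exp (μ - 1) * Real.Gamma (1 + β) ^ (1 - α)) *
        (‖ζ‖ ^ r * Real.Gamma (1 + β + r) ^ α / r.factorial) := by
    intro r
    rw [hcnorm r]
    have hGr : 0 < g r := hgpos r
    have e1 : ‖ζ‖ ^ r / (r.factorial * g r ^ (μ - 1)) * g r
        = (‖ζ‖ ^ r / r.factorial) * (g r ^ (1 - μ) * g r) := by
      rw [show (1:ℝ) - μ = -(μ-1) by ring, Real.rpow_neg hGr.le]
      field_simp
    rw [e1]
    have h2 : g r ^ (1 - μ) ≤ Real.exp (μ - 1) := by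
      have := Real.rpow_le_rpow_of_nonpos (Real.exp_pos (-1))
        (exp_neg_one_le_Gamma (by linarith [mul_nonneg hα0.le (Nat.cast_nonneg (α := ℝ) r)] :
          (1:ℝ) ≤ 1 + β + α * r)) (by linarith : 1 - μ ≤ 0)
      calc g r ^ (1-μ) ≤ Real.exp (-1) ^ (1-μ) := this
        _ = Real.exp (μ - 1) := by
          rw [← Real.exp_mul]; ring_nf
    have h3 : g r ≤ Real.Gamma (1 + β) ^ (1 - α) * Real.Gamma (1 + β + r) ^ α := by
      have := Gamma_interp (x := 1 + β) (y := 1 + β + r) (θ := α)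
        (by positivity) (by positivity) hα0.le hα1.le
      calc g r = Real.Gamma ((1 - α) * (1 + β) + α * (1 + β + r)) := by rw [hg]; ring_nf
        _ ≤ _ := this
    calc (‖ζ‖ ^ r / r.factorial) * (g r ^ (1 - μ) * g r)
        ≤ (‖ζ‖ ^ r / r.factorial) *
          (Real.exp (μ - 1) * (Real.Gamma (1 + β) ^ (1 - α) * Real.Gamma (1 + β + r) ^ α)) := by
          apply mul_le_mul_of_nonneg_left _ (by positivity)
          exact mul_le_mul h2 h3 hGr.le (by positivity)
      _ = (Real.exp (μ - 1) * Real.Gamma (1 + β) ^ (1 - α)) *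
          (‖ζ‖ ^ r * Real.Gamma (1 + β + r) ^ α / r.factorial) := by ring
  have hFsum : Summable fun r : ℕ => ∫ t in Ioi (0:ℝ), ‖F r t‖ := by
    rw [hnorm]
    apply Summable.of_nonneg_of_le (fun r => by positivity) hK
    exact ((A_summable α β ‖ζ‖ hα0 hα1 hβ (norm_nonneg ζ)).mul_left _)
  rw [← MeasureTheory.integral_tsum_of_summable_integral_norm hFint hFsum]
  -- compute each integral
  have hInt : ∀ r : ℕ, ∫ t in Ioi (0:ℝ), F r t = c r * ((g r : ℝ) : ℂ) := by
    intro r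
    simp only [hF]
    rw [integral_const_mul]
    congr 1
    rw [← hgam r]
    exact integral_ofReal
  simp only [hInt]
  rw [genLeRoy]
  refine tsum_congr fun r => ?_
  have hGr : 0 < g r := hgpos r
  have h4 : Real.Gamma (1 + β + α * r) ^ (μ - 1 - 1) = g r ^ (μ - 1) / g r :=
    Real.rpow_sub_one hGr.ne' (μ - 1)
  rw [h4]
  simp only [hc]
  have hne1 : ((r.factorial : ℝ) : ℂ) ≠ 0 := by
    simp [Nat.factorial_ne_zero]
  have hne2 : ((g r ^ (μ - 1) : ℝ) : ℂ) ≠ 0 := by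
    simp [Complex.ofReal_ne_zero]
    positivity
  have hne3 : ((g r : ℝ) : ℂ) ≠ 0 := by
    simp [Complex.ofReal_ne_zero]
    exact hGr.ne'
  push_cast
  field_simp
end

section
/- Let α > 0 and s be real, and let n ∈ ℕ. For every complex ζ with |ζ| < 1, the n-th derivative of the Lerch transcendent ζ ↦ Φ(ζ; α, s) at ζ equals ∑_{r=0}^∞ Γ(1+r+n) ζ^r / ((r+n+α)^s · r!), i.e. ∂ⁿ_ζ Φ(ζ; α, s) = n! · Φ(ζ; α+n, 1+n, s). -/
open Finset

private lemma fact_prod (r n : ℕ) :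
    (r.factorial : ℝ) * ∏ i ∈ Finset.range n, ((r + i + 1 : ℕ) : ℝ) =
      ((r + n).factorial : ℝ) := by
  induction n with
  | zero => simp
  | succ n ih =>
    rw [Finset.prod_range_succ, ← mul_assoc, ih,
      show r + (n + 1) = (r + n) + 1 from rfl, Nat.factorial_succ]
    push_cast
    ring

private lemma summable_bound (C : ℝ) (p : ℕ) {R : ℝ} (hR0 : 0 < R)
    (hR1 : R < 1) : Summable (fun r : ℕ => C * ((r : ℝ) + 1) ^ p * R ^ r) := by
  have h : Summable (fun n : ℕ => (n : ℝ) ^ p * R ^ n) :=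
    summable_pow_mul_geometric_of_norm_lt_one p
      (by rwa [Real.norm_eq_abs, abs_of_nonneg hR0.le])
  have h1 : Summable (fun n : ℕ => ((n + 1 : ℕ) : ℝ) ^ p * R ^ (n + 1)) :=
    (summable_nat_add_iff 1).2 h
  refine (h1.mul_left (C * R⁻¹)).congr fun n => ?_
  have hRR : R⁻¹ * R = 1 := inv_mul_cancel₀ hR0.ne'
  push_cast
  rw [pow_succ]
  linear_combination (C * ((n : ℝ) + 1) ^ p * R ^ n) * hRR

private lemma core {c : ℕ → ℂ} {C : ℝ} {p : ℕ}
    (hC : ∀ r : ℕ, ‖c r‖ ≤ C * ((r : ℝ) + 1) ^ p) {z : ℂ} (hz : ‖z‖ < 1) :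
    HasDerivAt (fun w : ℂ => ∑' r : ℕ, c r * w ^ r)
      (∑' r : ℕ, c r * ((r : ℂ) * z ^ (r - 1))) z ∧
    Summable (fun r : ℕ => c r * ((r : ℂ) * z ^ (r - 1))) := by
  have hC0 : 0 ≤ C := le_trans (norm_nonneg (c 0)) (by simpa using hC 0)
  set R : ℝ := (‖z‖ + 1) / 2 with hR
  have hzR : ‖z‖ < R := by rw [hR]; linarith
  have hR0 : 0 < R := lt_of_le_of_lt (norm_nonneg z) hzR
  have hR1 : R < 1 := by rw [hR]; linarith
  set u : ℕ → ℝ := fun r => C * ((r : ℝ) + 1) ^ (p + 1) * R ^ r * R⁻¹ with hu'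
  have hu : Summable u := (summable_bound C (p + 1) hR0 hR1).mul_right _
  have key : ∀ (r : ℕ) (y : ℂ), ‖y‖ ≤ R → ‖c r * ((r : ℂ) * y ^ (r - 1))‖ ≤ u r := by
    intro r y hy
    match r with
    | 0 => simp only [hu', Nat.cast_zero, zero_mul, mul_zero, norm_zero]; positivity
    | (r + 1) =>
      have h1 : ‖c (r + 1)‖ ≤ C * ((r : ℝ) + 1 + 1) ^ p := by
        have := hC (r + 1); push_cast at this; exact this
      have h2 : ‖y‖ ^ r ≤ R ^ r := pow_le_pow_left₀ (norm_nonneg y) hy r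
      have hRR : R⁻¹ * R = 1 := inv_mul_cancel₀ hR0.ne'
      have hur : u (r + 1) = C * ((r : ℝ) + 1 + 1) ^ (p + 1) * R ^ r := by
        show C * (((r + 1 : ℕ) : ℝ) + 1) ^ (p + 1) * R ^ (r + 1) * R⁻¹ = _
        push_cast
        rw [pow_succ R r]
        linear_combination (C * ((r : ℝ) + 1 + 1) ^ (p + 1) * R ^ r) * hRR
      rw [hur, Nat.add_sub_cancel, norm_mul, norm_mul, norm_pow, Complex.norm_natCast]
      push_cast
      calc ‖c (r + 1)‖ * (((r : ℝ) + 1) * ‖y‖ ^ r)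
          ≤ (C * ((r : ℝ) + 1 + 1) ^ p) * (((r : ℝ) + 1 + 1) * R ^ r) := by
            gcongr <;> linarith
        _ = C * ((r : ℝ) + 1 + 1) ^ (p + 1) * R ^ r := by ring
  have hsum : Summable (fun r : ℕ => c r * ((r : ℂ) * z ^ (r - 1))) :=
    Summable.of_norm_bounded hu fun r => key r z hzR.le
  refine ⟨?_, hsum⟩
  refine hasDerivAt_tsum_of_isPreconnected hu Metric.isOpen_ball
    (convex_ball (0 : ℂ) R).isPreconnected
    (fun r y _ => (hasDerivAt_pow r y).const_mul (c r))
    (fun r y hy => key r y (le_of_lt (mem_ball_zero_iff.mp hy)))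
    (Metric.mem_ball_self hR0) ?_ (mem_ball_zero_iff.mpr hzR)
  exact summable_of_ne_finset_zero (s := {0}) fun r hr => by
    simp [zero_pow (by simpa using hr)]

private lemma tsum_shift {c : ℕ → ℂ} {C : ℝ} {p : ℕ}
    (hC : ∀ r : ℕ, ‖c r‖ ≤ C * ((r : ℝ) + 1) ^ p) {z : ℂ} (hz : ‖z‖ < 1) :
    ∑' r : ℕ, c r * ((r : ℂ) * z ^ (r - 1)) =
      ∑' r : ℕ, ((r : ℂ) + 1) * c (r + 1) * z ^ r := by
  rw [Summable.tsum_eq_zero_add (core hC hz).2]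
  simp only [Nat.cast_zero, zero_mul, mul_zero, zero_add]
  refine tsum_congr fun r => ?_
  simp only [Nat.add_sub_cancel]
  push_cast
  ring

private lemma key_iter : ∀ (n : ℕ) (c : ℕ → ℂ) (C : ℝ) (p : ℕ),
    (∀ r : ℕ, ‖c r‖ ≤ C * ((r : ℝ) + 1) ^ p) → ∀ z : ℂ, ‖z‖ < 1 →
    iteratedDeriv n (fun w : ℂ => ∑' r : ℕ, c r * w ^ r) z =
      ∑' r : ℕ, (∏ i ∈ Finset.range n, ((r + i + 1 : ℕ) : ℂ)) * c (r + n) * z ^ r := by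
  intro n
  induction n with
  | zero => intro c C p hC z hz; simp
  | succ n ih =>
    intro c C p hC z hz
    have hC0 : 0 ≤ C := le_trans (norm_nonneg (c 0)) (by simpa using hC 0)
    set c' : ℕ → ℂ := fun r => ((r : ℂ) + 1) * c (r + 1) with hc'
    have hC' : ∀ r : ℕ, ‖c' r‖ ≤ (C * 2 ^ p) * ((r : ℝ) + 1) ^ (p + 1) := by
      intro r
      have h1 : ‖c (r + 1)‖ ≤ C * ((r : ℝ) + 1 + 1) ^ p := by
        have := hC (r + 1); push_cast at this; exact this
      have hr : (0:ℝ) ≤ (r:ℝ) := Nat.cast_nonneg r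
      have h2 : C * ((r : ℝ) + 1 + 1) ^ p ≤ C * (2 * ((r : ℝ) + 1)) ^ p := by
        gcongr <;> linarith
      have hcast : ‖c' r‖ = ((r : ℝ) + 1) * ‖c (r + 1)‖ := by
        rw [hc']
        simp only [norm_mul]
        congr 1
        rw [show ((r : ℂ) + 1) = ((r + 1 : ℕ) : ℂ) by push_cast; ring, Complex.norm_natCast]
        push_cast; ring
      rw [hcast]
      calc ((r : ℝ) + 1) * ‖c (r + 1)‖
          ≤ ((r : ℝ) + 1) * (C * (2 * ((r : ℝ) + 1)) ^ p) := by
            gcongr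
            exact h1.trans h2
        _ = (C * 2 ^ p) * ((r : ℝ) + 1) ^ (p + 1) := by
            rw [mul_pow]; ring
    rw [iteratedDeriv_succ']
    have heq : iteratedDeriv n (deriv (fun w : ℂ => ∑' r : ℕ, c r * w ^ r)) z =
        iteratedDeriv n (fun w : ℂ => ∑' r : ℕ, c' r * w ^ r) z := by
      apply Filter.EventuallyEq.iteratedDeriv_eq
      have hmem : ∀ᶠ w in nhds z, w ∈ Metric.ball (0 : ℂ) 1 :=
        Metric.isOpen_ball.eventually_mem (mem_ball_zero_iff.mpr hz)
      filter_upwards [hmem] with w hw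
      have hw' : ‖w‖ < 1 := mem_ball_zero_iff.mp hw
      rw [(core hC hw').1.deriv, tsum_shift hC hw']
    rw [heq, ih c' (C * 2 ^ p) (p + 1) hC' z hz]
    refine tsum_congr fun r => ?_
    rw [Finset.prod_range_succ, hc']
    simp only [← Nat.add_assoc]
    push_cast
    ring


/-- The Lerch transcendent `Φ(ζ; α, s) = ∑_{r=0}^∞ ζ^r / (r+α)^s`. -/
noncomputable def lerch (ζ : ℂ) (α s : ℝ) : ℂ :=
  ∑' r : ℕ, ζ ^ r / ((((r : ℝ) + α) ^ s : ℝ) : ℂ)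

/-- The generalised Lerch transcendent
`Φ(ζ; α, β, s) = ∑_{r=0}^∞ (β)_r ζ^r / ((r+α)^s r!)` where `(β)_r = Γ(β+r)/Γ(β)`. -/
noncomputable def genLerch (ζ : ℂ) (α β s : ℝ) : ℂ :=
  ∑' r : ℕ,
    (((Real.Gamma (β + (r : ℝ)) / Real.Gamma β) /
      (((r : ℝ) + α) ^ s * (r.factorial : ℝ)) : ℝ) : ℂ) * ζ ^ r

/-- For `α > 0` and `|ζ| < 1`, the `n`-th derivative of the Lerch transcendent is
`∂ⁿ_ζ Φ(ζ; α, s) = ∑_{r=0}^∞ Γ(1+r+n) ζ^r / ((r+n+α)^s r!) = n! Φ(ζ; α+n, 1+n, s)`. -/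
theorem lerch_iteratedDeriv (α s : ℝ) (hα : 0 < α) (n : ℕ) (ζ : ℂ)
    (hζ : ‖ζ‖ < 1) :
    (iteratedDeriv n (fun z => lerch z α s) ζ =
      ∑' r : ℕ,
        ((Real.Gamma (1 + (r : ℝ) + (n : ℝ)) /
          ((((r : ℝ) + (n : ℝ) + α) ^ s) * (r.factorial : ℝ)) : ℝ) : ℂ) * ζ ^ r) ∧
    iteratedDeriv n (fun z => lerch z α s) ζ =
      (n.factorial : ℂ) * genLerch ζ (α + n) (1 + n) s := by
  have hζ' : ‖ζ‖ < 1 := by exact hζ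
  set c : ℕ → ℂ := fun r => ((((((r : ℝ) + α) ^ s : ℝ)) : ℂ))⁻¹ with hc
  have hpos : ∀ r : ℕ, (0 : ℝ) < ((r : ℝ) + α) ^ s := fun r =>
    Real.rpow_pos_of_pos (by positivity) s
  have hnorm : ∀ r : ℕ, ‖c r‖ = (((r : ℝ) + α) ^ s)⁻¹ := by
    intro r
    simp [hc, Real.norm_eq_abs, abs_of_pos (hpos r)]
  obtain ⟨C, p, hCb⟩ : ∃ (C : ℝ) (p : ℕ), ∀ r : ℕ, ‖c r‖ ≤ C * ((r : ℝ) + 1) ^ p := by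
    rcases le_or_gt 0 s with hs | hs
    · refine ⟨(α ^ s)⁻¹, 0, fun r => ?_⟩
      have h1 : α ^ s ≤ ((r : ℝ) + α) ^ s :=
        Real.rpow_le_rpow hα.le (by linarith [Nat.cast_nonneg (α := ℝ) r]) hs
      rw [hnorm r, pow_zero, mul_one]
      exact inv_anti₀ (Real.rpow_pos_of_pos hα s) h1
    · set A : ℝ := max 1 α with hA
      have hA1 : (1 : ℝ) ≤ A := le_max_left 1 α
      have hAα : α ≤ A := le_max_right 1 α
      refine ⟨A ^ (-s), ⌈-s⌉₊, fun r => ?_⟩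
      have hr0 : (0 : ℝ) ≤ (r : ℝ) := Nat.cast_nonneg r
      have h0 : (0 : ℝ) < (r : ℝ) + α := by positivity
      rw [hnorm r, ← Real.rpow_neg h0.le s]
      calc ((r : ℝ) + α) ^ (-s)
          ≤ (((r : ℝ) + 1) * A) ^ (-s) :=
            Real.rpow_le_rpow h0.le (by nlinarith) (by linarith)
        _ = ((r : ℝ) + 1) ^ (-s) * A ^ (-s) :=
            Real.mul_rpow (by positivity) (by positivity)
        _ ≤ ((r : ℝ) + 1) ^ ((⌈-s⌉₊ : ℝ)) * A ^ (-s) := by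
            have := Real.rpow_le_rpow_of_exponent_le (by linarith : (1:ℝ) ≤ (r:ℝ) + 1)
              (Nat.le_ceil (-s))
            have hApos : (0:ℝ) ≤ A ^ (-s) := (Real.rpow_pos_of_pos (by linarith) _).le
            exact mul_le_mul_of_nonneg_right this hApos
        _ = A ^ (-s) * ((r : ℝ) + 1) ^ ⌈-s⌉₊ := by rw [Real.rpow_natCast]; ring
  have hf : (fun z : ℂ => lerch z α s) = fun w : ℂ => ∑' r : ℕ, c r * w ^ r := by
    funext w
    unfold lerch
    refine tsum_congr fun r => ?_
    rw [hc, div_eq_mul_inv, mul_comm]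
  have hkey := key_iter n c C p hCb ζ hζ'
  have h1 : iteratedDeriv n (fun z => lerch z α s) ζ =
      ∑' r : ℕ,
        ((Real.Gamma (1 + (r : ℝ) + (n : ℝ)) /
          ((((r : ℝ) + (n : ℝ) + α) ^ s) * (r.factorial : ℝ)) : ℝ) : ℂ) * ζ ^ r := by
    rw [hf, hkey]
    refine tsum_congr fun r => ?_
    have hG : Real.Gamma (1 + (r : ℝ) + (n : ℝ)) = ((r + n).factorial : ℝ) := by
      rw [show (1 + (r : ℝ) + (n : ℝ)) = ((r + n : ℕ) : ℝ) + 1 by push_cast; ring]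
      exact Real.Gamma_nat_eq_factorial (r + n)
    have hDpos : (0 : ℝ) < ((r : ℝ) + (n : ℝ) + α) ^ s :=
      Real.rpow_pos_of_pos (by positivity) s
    have hcrn : c (r + n) = (((((r : ℝ) + (n : ℝ) + α) ^ s : ℝ)) : ℂ)⁻¹ := by
      rw [hc]
      norm_num
    have hprodC : ((r.factorial : ℂ)) * ∏ i ∈ Finset.range n, ((r + i + 1 : ℕ) : ℂ) =
        (((r + n).factorial : ℂ)) := by
      exact_mod_cast congrArg Complex.ofReal (fact_prod r n)
    congr 1
    rw [hG, hcrn]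
    have hD' : ((((r : ℝ) + (n : ℝ) + α) ^ s : ℝ) : ℂ) ≠ 0 :=
      Complex.ofReal_ne_zero.mpr hDpos.ne'
    have hfac : ((r.factorial : ℂ)) ≠ 0 := Nat.cast_ne_zero.mpr r.factorial_ne_zero
    push_cast at hprodC ⊢
    field_simp
    linear_combination hprodC
  refine ⟨h1, h1.trans ?_⟩
  rw [genLerch, ← tsum_mul_left]
  refine tsum_congr fun r => ?_
  rw [← mul_assoc]
  congr 1
  have hfn : (n.factorial : ℝ) ≠ 0 := Nat.cast_ne_zero.mpr n.factorial_ne_zero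
  have e : (n.factorial : ℝ) * ((Real.Gamma ((1 + (n : ℝ)) + (r : ℝ)) /
        Real.Gamma (1 + (n : ℝ))) / (((r : ℝ) + (α + (n : ℝ))) ^ s * (r.factorial : ℝ))) =
      Real.Gamma (1 + (r : ℝ) + (n : ℝ)) /
        ((((r : ℝ) + (n : ℝ) + α) ^ s) * (r.factorial : ℝ)) := by
    rw [show ((1 : ℝ) + (n : ℝ)) + (r : ℝ) = 1 + (r : ℝ) + (n : ℝ) by ring,
      show ((1 : ℝ) + (n : ℝ)) = ((n : ℕ) : ℝ) + 1 by push_cast; ring,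
      Real.Gamma_nat_eq_factorial,
      show (r : ℝ) + (α + (n : ℝ)) = (r : ℝ) + (n : ℝ) + α by ring]
    field_simp
  rw [show ((n.factorial : ℂ)) = (((n.factorial : ℝ)) : ℂ) by norm_cast,
    ← Complex.ofReal_mul, e]
end

section
/- Let s be real and let ζ₁, ζ₂ be complex numbers with |ζ₁| + |ζ₂| < 1. Then ∑_{m=0}^∞ (ζ₁+ζ₂)^m / (m+1)^s = ∑_{r=0}^∞ ζ₁^r · Φ(ζ₂; 1+r, 1+r, s); equivalently, when ζ₁+ζ₂ ≠ 0, Li_s(ζ₁+ζ₂)/(ζ₁+ζ₂) = ∑_{r=0}^∞ ζ₁^r Φ(ζ₂; 1+r, 1+r, s). -/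
open Finset

private lemma summable_geom_rpow (s : ℝ) {a : ℝ} (ha0 : 0 ≤ a) (ha : a < 1) :
    Summable fun n : ℕ => a ^ n / ((n : ℝ) + 1) ^ s := by
  obtain ⟨d, hd⟩ := exists_nat_ge (-s)
  have hnorm : ‖a‖ < 1 := by rwa [Real.norm_eq_abs, abs_of_nonneg ha0]
  have hsum : Summable fun n : ℕ => ((n : ℝ) + 1) ^ d * a ^ n := by
    have heq : ∀ n : ℕ, ((n : ℝ) + 1) ^ d * a ^ n
        = ∑ j ∈ range (d + 1), (n : ℝ) ^ j * (d.choose j : ℝ) * a ^ n := by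
      intro n
      rw [add_pow, Finset.sum_mul]
      exact Finset.sum_congr rfl fun j _ => by ring
    refine Summable.congr ?_ fun n => (heq n).symm
    refine summable_sum fun j _ => ?_
    exact ((summable_pow_mul_geometric_of_norm_lt_one j hnorm).mul_right
      ((d.choose j : ℝ))).congr fun n => by ring
  refine Summable.of_nonneg_of_le (fun n => by positivity) (fun n => ?_) hsum
  have h1 : (0:ℝ) < (n : ℝ) + 1 := by positivity
  rw [div_eq_mul_inv, ← Real.rpow_neg h1.le, mul_comm]
  refine mul_le_mul_of_nonneg_right ?_ (pow_nonneg ha0 n)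
  calc ((n : ℝ) + 1) ^ (-s) ≤ ((n : ℝ) + 1) ^ (d : ℝ) :=
        Real.rpow_le_rpow_of_exponent_le (le_add_of_nonneg_left (Nat.cast_nonneg n)) hd
    _ = ((n : ℝ) + 1) ^ d := Real.rpow_natCast _ d

/-- For `|ζ₁| + |ζ₂| < 1`,
`Li_s(ζ₁+ζ₂)/(ζ₁+ζ₂) = ∑_{m=0}^∞ (ζ₁+ζ₂)^m/(m+1)^s = ∑_{r=0}^∞ ζ₁^r Φ(ζ₂; 1+r, 1+r, s)`. -/
theorem polylog_addition (s : ℝ) (ζ₁ ζ₂ : ℂ)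
    (h : ‖ζ₁‖ + ‖ζ₂‖ < 1) :
    ∑' m : ℕ, (ζ₁ + ζ₂) ^ m / ((((m : ℝ) + 1) ^ s : ℝ) : ℂ) =
      ∑' r : ℕ, ζ₁ ^ r * genLerch ζ₂ (1 + r) (1 + r) s := by
  set a₁ := ‖ζ₁‖ with ha₁
  set a₂ := ‖ζ₂‖ with ha₂
  set F : ℕ × ℕ → ℂ := fun p =>
    ((p.1 + p.2).choose p.1 : ℂ) * (ζ₁ ^ p.1 * ζ₂ ^ p.2) /
      (((((p.1 + p.2 : ℕ) : ℝ) + 1) ^ s : ℝ) : ℂ) with hFdef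
  set G : ℕ × ℕ → ℝ := fun p =>
    ((p.1 + p.2).choose p.1 : ℝ) * (a₁ ^ p.1 * a₂ ^ p.2) /
      (((p.1 + p.2 : ℕ) : ℝ) + 1) ^ s with hGdef
  have hGpos : ∀ p : ℕ × ℕ, 0 ≤ G p := by
    intro p
    have := norm_nonneg ζ₁
    have := norm_nonneg ζ₂
    have : (0:ℝ) < (((p.1 + p.2 : ℕ) : ℝ) + 1) ^ s :=
      Real.rpow_pos_of_pos (by positivity) s
    positivity
  have hFnorm : ∀ p : ℕ × ℕ, ‖F p‖ = G p := by
    intro p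
    have hpos : (0:ℝ) < (((p.1 + p.2 : ℕ) : ℝ) + 1) ^ s :=
      Real.rpow_pos_of_pos (by positivity) s
    simp only [hFdef, hGdef, norm_div, norm_mul, norm_pow,
      Complex.norm_natCast, Complex.norm_real, Real.norm_eq_abs]
    rw [abs_of_pos hpos]
  -- the fiberwise sum of G over the antidiagonal
  have hfiber : ∀ n : ℕ, ∑ kl ∈ antidiagonal n, G kl
      = (a₁ + a₂) ^ n / ((n : ℝ) + 1) ^ s := by
    intro n
    have : ∀ kl ∈ antidiagonal n, G kl
        = (n.choose kl.1 : ℝ) • (a₁ ^ kl.1 * a₂ ^ kl.2) / ((n : ℝ) + 1) ^ s := by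
      intro kl hkl
      rw [Finset.HasAntidiagonal.mem_antidiagonal] at hkl
      simp only [hGdef, smul_eq_mul]
      rw [hkl]
    rw [Finset.sum_congr rfl this, ← Finset.sum_div]
    congr 1
    rw [(Commute.all a₁ a₂).add_pow' n]
    exact Finset.sum_congr rfl fun kl _ => by simp [smul_eq_mul]
  have ha0 : 0 ≤ a₁ + a₂ := by positivity
  have hGsigma : Summable fun x : Σ n : ℕ, antidiagonal n => G x.2 := by
    rw [summable_sigma_of_nonneg (fun x => hGpos _)]
    refine ⟨fun n => (hasSum_fintype _).summable, ?_⟩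
    have : ∀ n : ℕ, ∑' kl : antidiagonal n, G kl = (a₁ + a₂) ^ n / ((n : ℝ) + 1) ^ s := by
      intro n
      rw [Finset.tsum_subtype]
      exact hfiber n
    rw [funext this]
    exact summable_geom_rpow s ha0 h
  have hFGsum : Summable fun p : ℕ × ℕ => ‖F p‖ :=
    ((Finset.HasAntidiagonal.sigmaAntidiagonalEquivProd (A := ℕ)).summable_iff
      (f := fun p : ℕ × ℕ => ‖F p‖)).1 (hGsigma.congr fun x => (hFnorm _).symm)
  have hFsum : Summable F := hFGsum.of_norm
  have hFsigma : Summable fun x : Σ n : ℕ, antidiagonal n => F x.2 :=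
    ((Finset.HasAntidiagonal.sigmaAntidiagonalEquivProd (A := ℕ)).summable_iff (f := F)).2 hFsum
  -- LHS equals the sigma sum
  have hLHS : ∑' m : ℕ, (ζ₁ + ζ₂) ^ m / ((((m : ℝ) + 1) ^ s : ℝ) : ℂ) = ∑' p : ℕ × ℕ, F p := by
    have hsig : ∑' x : Σ n : ℕ, antidiagonal n, F x.2 = ∑' p : ℕ × ℕ, F p :=
      (Finset.HasAntidiagonal.sigmaAntidiagonalEquivProd (A := ℕ)).tsum_eq F
    rw [← hsig, Summable.tsum_sigma' (fun n => (hasSum_fintype _).summable) hFsigma]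
    refine tsum_congr fun m => ?_
    rw [Finset.tsum_subtype]
    have : ∀ kl ∈ antidiagonal m, F kl
        = (m.choose kl.1 : ℂ) • (ζ₁ ^ kl.1 * ζ₂ ^ kl.2) / ((((m : ℝ) + 1) ^ s : ℝ) : ℂ) := by
      intro kl hkl
      rw [Finset.HasAntidiagonal.mem_antidiagonal] at hkl
      simp only [hFdef, smul_eq_mul]
      rw [hkl]
    rw [Finset.sum_congr rfl this, ← Finset.sum_div]
    congr 1
    rw [(Commute.all ζ₁ ζ₂).add_pow' m]
    exact Finset.sum_congr rfl fun kl _ => by simp [smul_eq_mul]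
  -- RHS
  have hRHS : ∑' p : ℕ × ℕ, F p = ∑' r : ℕ, ζ₁ ^ r * genLerch ζ₂ (1 + r) (1 + r) s := by
    rw [Summable.tsum_prod' hFsum fun r => (hFsum.prod_factor r)]
    refine tsum_congr fun r => ?_
    rw [genLerch, ← tsum_mul_left]
    refine tsum_congr fun k => ?_
    have hcoeff : ((Real.Gamma ((1 + (r:ℝ)) + (k : ℝ)) / Real.Gamma (1 + (r:ℝ))) /
        (((k : ℝ) + (1 + (r:ℝ))) ^ s * (k.factorial : ℝ)) : ℝ)
        = ((r + k).choose r : ℝ) / (((r + k : ℕ) : ℝ) + 1) ^ s := by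
      have h1 : (1 : ℝ) + (r:ℝ) + (k:ℝ) = ((r + k : ℕ) : ℝ) + 1 := by push_cast; ring
      have h2 : (1 : ℝ) + (r:ℝ) = (r : ℝ) + 1 := by ring
      have h3 : (k : ℝ) + (1 + (r:ℝ)) = ((r + k : ℕ) : ℝ) + 1 := by push_cast; ring
      rw [h1, h3, h2, Real.Gamma_nat_eq_factorial, Real.Gamma_nat_eq_factorial]
      have hch : ((r + k).choose r : ℝ) * (r.factorial : ℝ) * (k.factorial : ℝ)
          = ((r + k).factorial : ℝ) := by
        rw [← Nat.cast_mul, ← Nat.cast_mul]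
        congr 1
        have := Nat.choose_mul_factorial_mul_factorial (Nat.le_add_right r k)
        simpa [Nat.add_sub_cancel_left] using this
      have hfr : (0:ℝ) < (r.factorial : ℝ) := by positivity
      have hfk : (0:ℝ) < (k.factorial : ℝ) := by positivity
      have hrp : (0:ℝ) < (((r + k : ℕ) : ℝ) + 1) ^ s := Real.rpow_pos_of_pos (by positivity) s
      push_cast at hch ⊢
      field_simp
      linear_combination (-1 : ℝ) * hch
    show F (r, k) = _
    rw [hFdef]
    simp only
    rw [hcoeff]
    push_cast
    have hrp : ((((r + k : ℕ) : ℝ) + 1) ^ s : ℝ) ≠ 0 :=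
      (Real.rpow_pos_of_pos (by positivity) s).ne'
    field_simp
  rw [hLHS, hRHS]
end

section
/- Let s be real and define g_s(w) = ∑_{r=0}^∞ Γ(1 + r/2) w^r / ((1 + r/2)^s · r!), an entire function. Then for every real ζ with |ζ| < 1, the function x ↦ e^{−x²} g_s(2xζ) is integrable on ℝ and ∫_{−∞}^{∞} e^{−x²} g_s(2xζ) dx = √π · ∑_{k=0}^∞ ζ^{2k}/(k+1)^s; equivalently, for ζ ≠ 0 this equals √π · Li_s(ζ²)/ζ². -/
open MeasureTheory

/-- The 'polylogarithm of order 1/2':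
`g_s(w) = ∑_{r=0}^∞ Γ(1 + r/2) w^r / ((1 + r/2)^s r!)`. -/
noncomputable def gHalf (s : ℝ) (w : ℝ) : ℝ :=
  ∑' r : ℕ,
    Real.Gamma (1 + (r : ℝ) / 2) * w ^ r / ((1 + (r : ℝ) / 2) ^ s * (r.factorial : ℝ))



noncomputable def ghCoeff (s : ℝ) (r : ℕ) : ℝ :=
  Real.Gamma (1 + (r : ℝ) / 2) / ((1 + (r : ℝ) / 2) ^ s * (r.factorial : ℝ))

lemma ghCoeff_pos (s : ℝ) (r : ℕ) : 0 < ghCoeff s r := by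
  have h1 : (0:ℝ) < 1 + (r:ℝ)/2 := by positivity
  exact div_pos (Real.Gamma_pos_of_pos h1)
    (mul_pos (Real.rpow_pos_of_pos h1 s) (by exact_mod_cast r.factorial_pos))

lemma summable_aux (n : ℕ) {u : ℝ} (hu : 0 ≤ u) :
    Summable fun k : ℕ => ((k:ℝ)+1) ^ n * u ^ k / (k.factorial : ℝ) := by
  refine Summable.of_nonneg_of_le (fun k => by positivity) (fun k => ?_)
    ((Real.summable_pow_div_factorial ((2:ℝ)^n * u)).mul_left ((2:ℝ)^n))
  have h2 : (2:ℝ)^n * (((2:ℝ)^n * u) ^ k / (k.factorial : ℝ))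
      = ((2:ℝ)^(k+1))^n * u ^ k / (k.factorial : ℝ) := by
    rw [mul_pow, ← pow_mul, ← pow_mul, mul_div_assoc, ← mul_assoc, ← pow_add,
      show n + n * k = (k+1) * n by ring, mul_div_assoc]
  rw [h2]
  gcongr
  · exact_mod_cast (Nat.lt_two_pow_self (n := k+1)).le

lemma ghCoeff_even (s : ℝ) (k : ℕ) :
    ghCoeff s (2*k) = (k.factorial : ℝ) / (((k:ℝ)+1) ^ s * (((2*k).factorial : ℕ) : ℝ)) := by
  have e : 1 + ((2*k : ℕ):ℝ)/2 = (k:ℝ)+1 := by push_cast; ring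
  rw [ghCoeff, e, Real.Gamma_nat_eq_factorial]

lemma key_dup (r : ℕ) : (2:ℝ)^r * (Real.Gamma (((r:ℝ)+1)/2) * Real.Gamma (1 + (r:ℝ)/2))
    = Real.sqrt Real.pi * (r.factorial : ℝ) := by
  have h := Real.Gamma_mul_Gamma_add_half (((r:ℝ)+1)/2)
  rw [show ((r:ℝ)+1)/2 + 1/2 = 1 + (r:ℝ)/2 by ring,
      show (1:ℝ) - 2 * (((r:ℝ)+1)/2) = -(r:ℝ) by ring,
      show 2 * (((r:ℝ)+1)/2) = (r:ℝ)+1 by ring,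
      Real.Gamma_nat_eq_factorial,
      Real.rpow_neg (by norm_num), Real.rpow_natCast] at h
  rw [h]
  have h2 : ((2:ℝ)^r)⁻¹ * (2:ℝ)^r = 1 := inv_mul_cancel₀ (by positivity)
  calc (2:ℝ)^r * ((r.factorial:ℝ) * ((2:ℝ)^r)⁻¹ * Real.sqrt Real.pi)
      = (((2:ℝ)^r)⁻¹ * (2:ℝ)^r) * ((r.factorial:ℝ) * Real.sqrt Real.pi) := by ring
    _ = Real.sqrt Real.pi * (r.factorial : ℝ) := by rw [h2]; ring

lemma ghCoeff_odd (s : ℝ) (k : ℕ) :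
    ghCoeff s (2*k+1) = Real.sqrt Real.pi /
      ((2:ℝ)^(2*k+1) * (k.factorial : ℝ) * (((k:ℝ)+3/2) ^ s)) := by
  have hd := key_dup (2*k+1)
  have e1 : ((((2*k+1 : ℕ)):ℝ)+1)/2 = (k:ℝ)+1 := by push_cast; ring
  rw [e1, Real.Gamma_nat_eq_factorial] at hd
  -- hd : 2^(2k+1) * (k! * Γ(1 + (2k+1)/2)) = √π * (2k+1)!
  have e2 : 1 + ((2*k+1 : ℕ):ℝ)/2 = (k:ℝ)+3/2 := by push_cast; ring
  have hG : Real.Gamma ((k:ℝ)+3/2)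
      = Real.sqrt Real.pi * (((2*k+1).factorial : ℕ):ℝ) / ((2:ℝ)^(2*k+1) * (k.factorial : ℝ)) := by
    rw [e2] at hd
    rw [eq_div_iff (by positivity)]
    linear_combination hd
  rw [ghCoeff, e2, hG]
  have h1 : ((k.factorial:ℝ)) ≠ 0 := by positivity
  have h2 : (((2*k+1).factorial : ℕ):ℝ) ≠ 0 := by positivity
  have h3 : ((2:ℝ)^(2*k+1)) ≠ 0 := by positivity
  have h4 : (((k:ℝ)+3/2) ^ s) ≠ 0 := (Real.rpow_pos_of_pos (by positivity) s).ne'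
  field_simp

lemma summable_ghCoeff (s : ℝ) {t : ℝ} (ht : 0 ≤ t) :
    Summable fun r : ℕ => ghCoeff s r * t ^ r := by
  set n := ⌈|s|⌉₊ with hn
  have hexp : ∀ x : ℝ, 1 ≤ x → (x ^ s)⁻¹ ≤ x ^ n := by
    intro x hx
    rw [← Real.rpow_neg (by linarith), ← Real.rpow_natCast x n]
    exact Real.rpow_le_rpow_of_exponent_le hx ((neg_le_abs s).trans (Nat.le_ceil _))
  apply Summable.even_add_odd
  · refine Summable.of_nonneg_of_le
      (fun k => mul_nonneg (ghCoeff_pos s _).le (pow_nonneg ht _)) (fun k => ?_)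
      (summable_aux n (u := t^2) (by positivity))
    rw [ghCoeff_even, pow_mul]
    have h1 : (k.factorial:ℝ) / (((k:ℝ)+1)^s * (((2*k).factorial : ℕ) : ℝ))
        ≤ ((k:ℝ)+1)^(n:ℕ) / (k.factorial : ℝ) := by
      have hA : ((k.factorial : ℕ):ℝ) * ((k.factorial : ℕ):ℝ) ≤ (((2*k).factorial : ℕ):ℝ) := by
        exact_mod_cast Nat.le_of_dvd (2*k).factorial_pos
          (by rw [two_mul]; exact Nat.factorial_mul_factorial_dvd_factorial_add k k)
      have hC : (1:ℝ) ≤ ((k:ℝ)+1)^(n:ℕ) * ((k:ℝ)+1)^s := by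
        have hp : (0:ℝ) < ((k:ℝ)+1)^s := Real.rpow_pos_of_pos (by positivity) s
        calc (1:ℝ) = (((k:ℝ)+1)^s)⁻¹ * ((k:ℝ)+1)^s := (inv_mul_cancel₀ hp.ne').symm
          _ ≤ _ := mul_le_mul_of_nonneg_right
              (hexp ((k:ℝ)+1) (by linarith [k.cast_nonneg (α := ℝ)])) hp.le
      rw [div_le_div_iff₀ (by positivity) (by positivity)]
      have hfp : (0:ℝ) < (((2*k).factorial : ℕ):ℝ) := by positivity
      nlinarith [hA, hC, hfp]
    calc (k.factorial:ℝ) / (((k:ℝ)+1)^s * (((2*k).factorial : ℕ):ℝ)) * (t^2)^k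
        ≤ (((k:ℝ)+1)^(n:ℕ) / (k.factorial : ℝ)) * (t^2)^k := by
          exact mul_le_mul_of_nonneg_right h1 (by positivity)
      _ = ((k:ℝ)+1)^(n:ℕ) * (t^2)^k / (k.factorial : ℝ) := by ring
  · refine Summable.of_nonneg_of_le
      (fun k => mul_nonneg (ghCoeff_pos s _).le (pow_nonneg ht _)) (fun k => ?_)
      (((summable_aux n (u := t^2) (by positivity)).mul_left
        (Real.sqrt Real.pi * t * 2^n)))
    rw [ghCoeff_odd]
    have hC : (0:ℝ) < ((k:ℝ)+3/2)^s := Real.rpow_pos_of_pos (by positivity) s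
    have hB := hexp ((k:ℝ)+3/2) (by linarith [k.cast_nonneg (α := ℝ)])
    have hD : (((k:ℝ)+3/2))^(n:ℕ) ≤ (2*((k:ℝ)+1))^(n:ℕ) := by
      apply pow_le_pow_left₀ (by positivity) (by linarith [k.cast_nonneg (α := ℝ)])
    have hE : (1:ℝ) ≤ (2:ℝ)^(2*k+1) := one_le_pow₀ (by norm_num)
    have h5 : (((k:ℝ)+3/2)^s)⁻¹ ≤ (2:ℝ)^(n:ℕ) * ((k:ℝ)+1)^(n:ℕ) :=
      hB.trans (hD.trans_eq (mul_pow 2 _ n))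
    have h6 : ((2:ℝ)^(2*k+1))⁻¹ ≤ 1 := inv_le_one_of_one_le₀ hE
    have hkey : ((2:ℝ)^(2*k+1) * (k.factorial:ℝ) * ((k:ℝ)+3/2)^s)⁻¹
        ≤ (2:ℝ)^(n:ℕ) * ((k:ℝ)+1)^(n:ℕ) / (k.factorial : ℝ) := by
      rw [mul_inv, mul_inv]
      calc ((2:ℝ)^(2*k+1))⁻¹ * ((k.factorial:ℝ))⁻¹ * (((k:ℝ)+3/2)^s)⁻¹
          ≤ 1 * ((k.factorial:ℝ))⁻¹ * ((2:ℝ)^(n:ℕ) * ((k:ℝ)+1)^(n:ℕ)) :=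
            mul_le_mul (mul_le_mul h6 le_rfl (by positivity) (by norm_num)) h5
              (by positivity) (by positivity)
        _ = (2:ℝ)^(n:ℕ) * ((k:ℝ)+1)^(n:ℕ) / (k.factorial : ℝ) := by ring
    calc Real.sqrt Real.pi / ((2:ℝ)^(2*k+1) * (k.factorial:ℝ) * ((k:ℝ)+3/2)^s) * t^(2*k+1)
        = (Real.sqrt Real.pi * t * (t^2)^k)
            * ((2:ℝ)^(2*k+1) * (k.factorial:ℝ) * ((k:ℝ)+3/2)^s)⁻¹ := by ring
      _ ≤ (Real.sqrt Real.pi * t * (t^2)^k)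
            * ((2:ℝ)^(n:ℕ) * ((k:ℝ)+1)^(n:ℕ) / (k.factorial : ℝ)) := by
          apply mul_le_mul_of_nonneg_left hkey (by positivity)
      _ = Real.sqrt Real.pi * t * 2^n * (((k:ℝ)+1)^(n:ℕ) * (t^2)^k / (k.factorial:ℝ)) := by
          ring

lemma key_val (s : ℝ) (r : ℕ) : ghCoeff s r * (2:ℝ)^r * Real.Gamma (((r:ℝ)+1)/2)
    = Real.sqrt Real.pi / (1 + (r:ℝ)/2) ^ s := by
  have h1 : (0:ℝ) < 1 + (r:ℝ)/2 := by positivity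
  have hrp : ((1 + (r:ℝ)/2) ^ s : ℝ) ≠ 0 := (Real.rpow_pos_of_pos h1 s).ne'
  have hfac : ((r.factorial : ℝ)) ≠ 0 := by positivity
  rw [ghCoeff, div_mul_eq_mul_div, div_mul_eq_mul_div,
    div_eq_div_iff (mul_ne_zero hrp hfac) hrp]
  linear_combination ((1 + (r:ℝ)/2) ^ s) * key_dup r


lemma integrable_pow_gauss (r : ℕ) : Integrable fun x : ℝ => x ^ r * Real.exp (-x ^ 2) := by
  have h := integrable_rpow_mul_exp_neg_mul_sq (b := 1) one_pos (s := (r:ℝ))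
    (by exact_mod_cast neg_one_lt_zero.trans_le r.cast_nonneg)
  simpa [Real.rpow_natCast, neg_mul, one_mul] using h

lemma integrable_abs_pow_gauss (r : ℕ) :
    Integrable fun x : ℝ => |x| ^ r * Real.exp (-x ^ 2) := by
  have h := (integrable_pow_gauss r).abs
  simpa [abs_mul, abs_pow, abs_of_pos (Real.exp_pos _)] using h

lemma moment (r : ℕ) : ∫ x : ℝ, |x| ^ r * Real.exp (-x ^ 2) = Real.Gamma (((r:ℝ)+1)/2) := by
  have h := integral_rpow_mul_exp_neg_rpow (p := 2) (q := (r:ℝ)) two_pos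
    (by exact_mod_cast neg_one_lt_zero.trans_le r.cast_nonneg)
  have e0 : (fun x : ℝ => |x| ^ r * Real.exp (-x ^ 2))
      = fun x : ℝ => (fun y : ℝ => y ^ r * Real.exp (-y ^ 2)) |x| := by
    funext x; simp [sq_abs]
  rw [e0, integral_comp_abs (f := fun y : ℝ => y ^ r * Real.exp (-y ^ 2))]
  have e1 : ∫ x in Set.Ioi (0:ℝ), x ^ r * Real.exp (-x ^ 2)
      = ∫ x in Set.Ioi (0:ℝ), x ^ ((r:ℝ)) * Real.exp (-x ^ (2:ℝ)) := by
    refine setIntegral_congr_fun measurableSet_Ioi (fun x hx => ?_)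
    rw [Real.rpow_natCast, Real.rpow_two]
  rw [e1, h]; ring

lemma int_odd_zero (r : ℕ) (hr : Odd r) :
    ∫ x : ℝ, x ^ r * Real.exp (-x ^ 2) = 0 := by
  have key := (Measure.measurePreserving_neg (volume : Measure ℝ)).integral_comp
    (Homeomorph.neg ℝ).measurableEmbedding (fun y : ℝ => y ^ r * Real.exp (-y ^ 2))
  have e : ∀ x : ℝ, (-x) ^ r * Real.exp (-(-x) ^ 2) = -(x ^ r * Real.exp (-x ^ 2)) := by
    intro x; rw [hr.neg_pow, neg_sq]; ring
  simp only [e] at key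
  rw [integral_neg] at key
  linarith

lemma gHalf_eq (s w : ℝ) : gHalf s w = ∑' r : ℕ, ghCoeff s r * w ^ r :=
  tsum_congr fun r => by rw [ghCoeff, mul_div_right_comm]


/-- The polylogarithm is the Gauss transform of its counterpart of order `1/2`:
`∫_{-∞}^∞ e^{-x²} g_s(2xζ) dx = √π ∑_{k=0}^∞ ζ^{2k}/(k+1)^s = √π Li_s(ζ²)/ζ²`. -/
theorem gauss_transform_gHalf (s : ℝ) (ζ : ℝ) (hζ : |ζ| < 1) :
    Integrable (fun x : ℝ => Real.exp (-x ^ 2) * gHalf s (2 * x * ζ)) ∧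
      ∫ x : ℝ, Real.exp (-x ^ 2) * gHalf s (2 * x * ζ) =
        Real.sqrt Real.pi * ∑' k : ℕ, ζ ^ (2 * k) / ((k : ℝ) + 1) ^ s := by
  set F : ℕ → ℝ → ℝ := fun r x => Real.exp (-x^2) * (ghCoeff s r * (2*x*ζ)^r) with hF
  -- pointwise HasSum
  have hptsum : ∀ x : ℝ, HasSum (fun r => F r x) (Real.exp (-x^2) * gHalf s (2*x*ζ)) := by
    intro x
    have hs1 : Summable fun r : ℕ => ghCoeff s r * |2*x*ζ| ^ r :=
      summable_ghCoeff s (abs_nonneg _)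
    have habs : (fun r : ℕ => |ghCoeff s r * (2*x*ζ)^r|)
        = fun r : ℕ => ghCoeff s r * |2*x*ζ| ^ r := by
      funext r; rw [abs_mul, abs_pow, abs_of_pos (ghCoeff_pos s r)]
    have hs2 : Summable fun r : ℕ => ghCoeff s r * (2*x*ζ)^r :=
      Summable.of_abs (habs ▸ hs1)
    have h := hs2.hasSum
    rw [← gHalf_eq s (2*x*ζ)] at h
    exact h.mul_left _
  -- continuity / measurability
  have hFc : ∀ r, Continuous (F r) := by
    intro r
    exact (Real.continuous_exp.comp (continuous_pow 2).neg).mul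
      (continuous_const.mul (((continuous_const.mul continuous_id).mul continuous_const).pow r))
  have hfmeas : AEStronglyMeasurable
      (fun x : ℝ => Real.exp (-x^2) * gHalf s (2*x*ζ)) volume := by
    refine (stronglyMeasurable_of_tendsto (f := fun n x => ∑ r ∈ Finset.range n, F r x)
      Filter.atTop (fun n => ?_) ?_).aestronglyMeasurable
    · exact (continuous_finset_sum _ fun r _ => hFc r).stronglyMeasurable
    · rw [tendsto_pi_nhds]
      exact fun x => (hptsum x).tendsto_sum_nat
  -- norm of F r
  have hnorm : ∀ (r : ℕ) (x : ℝ),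
      ‖F r x‖ = ghCoeff s r * (2*|ζ|)^r * (|x|^r * Real.exp (-x^2)) := by
    intro r x
    rw [hF, Real.norm_eq_abs, abs_mul, abs_of_pos (Real.exp_pos _), abs_mul,
      abs_of_pos (ghCoeff_pos s r), abs_pow, abs_mul, abs_mul, abs_two]
    ring
  -- integrability of each term
  have hFint : ∀ r, Integrable (F r) := by
    intro r
    have e : F r = fun x => (ghCoeff s r * (2*ζ)^r) * (x ^ r * Real.exp (-x^2)) := by
      funext x; rw [hF]; ring
    rw [e]; exact (integrable_pow_gauss r).const_mul _
  -- values of ∫ ‖F r‖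
  have hJ : ∀ r : ℕ, ∫ x : ℝ, ‖F r x‖
      = Real.sqrt Real.pi * |ζ| ^ r / (1 + (r:ℝ)/2) ^ s := by
    intro r
    simp_rw [hnorm r]
    rw [MeasureTheory.integral_const_mul, moment r, mul_pow]
    linear_combination (|ζ|:ℝ)^r * key_val s r
  have hJs : Summable fun r : ℕ =>
      Real.sqrt Real.pi * |ζ| ^ r / (1 + (r:ℝ)/2) ^ s := by
    set n := ⌈|s|⌉₊ with hn
    have hbase : Summable fun r : ℕ => ((r:ℝ)+1)^(n:ℕ) * |ζ| ^ r := by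
      rcases eq_or_ne ζ 0 with h0 | h0
      · refine (summable_nat_add_iff 1).mp ?_
        simp only [h0, abs_zero, pow_succ, mul_zero]
        simpa using summable_zero
      · have h := summable_pow_mul_geometric_of_norm_lt_one (R := ℝ) n (r := |ζ|)
          (by rwa [Real.norm_eq_abs, abs_abs])
        have h2 := (summable_nat_add_iff 1).mpr h
        have h3 := h2.mul_left (|ζ|⁻¹)
        have e : (fun r : ℕ => |ζ|⁻¹ * ((((r+1:ℕ)):ℝ)^(n:ℕ) * |ζ|^(r+1)))
            = fun r : ℕ => ((r:ℝ)+1)^(n:ℕ) * |ζ| ^ r := by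
          funext r
          have : |ζ| ≠ 0 := abs_ne_zero.mpr h0
          push_cast
          field_simp
          ring
        rwa [e] at h3
    refine Summable.of_nonneg_of_le (fun r => by positivity) (fun r => ?_)
      (hbase.mul_left (Real.sqrt Real.pi))
    have h1 : (0:ℝ) < 1 + (r:ℝ)/2 := by positivity
    have hp : (0:ℝ) < (1 + (r:ℝ)/2)^s := Real.rpow_pos_of_pos h1 s
    have hB : ((1 + (r:ℝ)/2)^s)⁻¹ ≤ ((r:ℝ)+1)^(n:ℕ) := by
      rw [← Real.rpow_neg h1.le]
      calc (1 + (r:ℝ)/2) ^ (-s) ≤ (1 + (r:ℝ)/2) ^ ((n:ℕ):ℝ) :=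
            Real.rpow_le_rpow_of_exponent_le (by linarith [r.cast_nonneg (α := ℝ)])
              ((neg_le_abs s).trans (Nat.le_ceil _))
        _ ≤ ((r:ℝ)+1) ^ ((n:ℕ):ℝ) := by
            apply Real.rpow_le_rpow (by linarith) (by linarith [r.cast_nonneg (α := ℝ)])
              (by positivity)
        _ = ((r:ℝ)+1)^(n:ℕ) := Real.rpow_natCast _ n
    calc Real.sqrt Real.pi * |ζ|^r / (1 + (r:ℝ)/2)^s
        = (Real.sqrt Real.pi * |ζ|^r) * ((1 + (r:ℝ)/2)^s)⁻¹ := by ring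
      _ ≤ (Real.sqrt Real.pi * |ζ|^r) * ((r:ℝ)+1)^(n:ℕ) :=
          mul_le_mul_of_nonneg_left hB (by positivity)
      _ = Real.sqrt Real.pi * (((r:ℝ)+1)^(n:ℕ) * |ζ|^r) := by ring
  -- lintegral condition
  have hlint : ∑' r : ℕ, ∫⁻ x : ℝ, ‖F r x‖₊ ∂volume ≠ ⊤ := by
    have h1 : ∀ r : ℕ, ∫⁻ x : ℝ, ‖F r x‖₊ ∂volume
        = ENNReal.ofReal (∫ x : ℝ, ‖F r x‖) := by
      intro r
      rw [ofReal_integral_norm_eq_lintegral_enorm (hFint r)]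
      simp only [enorm_eq_nnnorm]
    simp_rw [h1, hJ]
    rw [← ENNReal.ofReal_tsum_of_nonneg (fun r => by positivity) hJs]
    exact ENNReal.ofReal_ne_top
  -- summability of norms pointwise
  have hsumnorm : ∀ x : ℝ, Summable fun r : ℕ => ‖F r x‖ := by
    intro x
    have h := (summable_ghCoeff s (t := 2 * |ζ| * |x|) (by positivity)).mul_left
      (Real.exp (-x^2))
    refine h.congr fun r => ?_
    rw [hnorm r x, mul_pow, mul_pow]
    ring
  -- Integrability of the limit
  have hInt : Integrable (fun x : ℝ => Real.exp (-x^2) * gHalf s (2*x*ζ)) := by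
    refine ⟨hfmeas, ?_⟩
    show (∫⁻ x : ℝ, ‖Real.exp (-x^2) * gHalf s (2*x*ζ)‖₊ ∂volume) < ⊤
    calc ∫⁻ x : ℝ, ‖Real.exp (-x^2) * gHalf s (2*x*ζ)‖₊ ∂volume
        ≤ ∫⁻ x : ℝ, ∑' r : ℕ, (‖F r x‖₊ : ENNReal) ∂volume := by
          apply lintegral_mono
          intro x
          dsimp only
          rw [← (hptsum x).tsum_eq]
          have hns : Summable fun r : ℕ => ‖F r x‖₊ :=
            NNReal.summable_coe.mp (by simpa [coe_nnnorm] using hsumnorm x)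
          calc (‖∑' r, F r x‖₊ : ENNReal) ≤ ((∑' r, ‖F r x‖₊ : NNReal) : ENNReal) := by
                exact_mod_cast nnnorm_tsum_le hns
            _ = ∑' r, (‖F r x‖₊ : ENNReal) := ENNReal.coe_tsum hns
      _ = ∑' r : ℕ, ∫⁻ x : ℝ, ‖F r x‖₊ ∂volume :=
          lintegral_tsum fun r => ((hFc r).measurable.nnnorm.coe_nnreal_ennreal).aemeasurable
      _ < ⊤ := hlint.lt_top
  refine ⟨hInt, ?_⟩
  -- compute the integral
  have heq : ∫ x : ℝ, Real.exp (-x^2) * gHalf s (2*x*ζ) = ∑' r : ℕ, ∫ x : ℝ, F r x := by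
    rw [show (fun x : ℝ => Real.exp (-x^2) * gHalf s (2*x*ζ)) = fun x => ∑' r, F r x from
      funext fun x => ((hptsum x).tsum_eq).symm]
    exact integral_tsum (fun r => (hFc r).aestronglyMeasurable) hlint
  have hI : ∀ r : ℕ, ∫ x : ℝ, F r x
      = ghCoeff s r * (2*ζ)^r * ∫ x : ℝ, x^r * Real.exp (-x^2) := by
    intro r
    rw [show F r = fun x => (ghCoeff s r * (2*ζ)^r) * (x^r * Real.exp (-x^2)) from
      funext fun x => by rw [hF]; ring]
    rw [MeasureTheory.integral_const_mul]
  have hIeven : ∀ k : ℕ, ∫ x : ℝ, F (2*k) x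
      = Real.sqrt Real.pi * (ζ^(2*k) / ((k:ℝ)+1)^s) := by
    intro k
    rw [hI (2*k)]
    have hev : ∫ x : ℝ, x^(2*k) * Real.exp (-x^2)
        = Real.Gamma (((((2*k : ℕ)):ℝ)+1)/2) := by
      have e : (fun x : ℝ => x^(2*k) * Real.exp (-x^2))
          = fun x : ℝ => |x|^(2*k) * Real.exp (-x^2) := by
        funext x; rw [pow_mul, pow_mul, sq_abs]
      rw [e, moment]
    rw [hev]
    have hkv := key_val s (2*k)
    have hbase : (1 + ((2*k:ℕ):ℝ)/2) = (k:ℝ)+1 := by push_cast; ring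
    rw [hbase] at hkv
    rw [mul_pow]
    linear_combination (ζ^(2*k)) * hkv
  have hIodd : ∀ r : ℕ, Odd r → ∫ x : ℝ, F r x = 0 := by
    intro r hr
    rw [hI r, int_odd_zero r hr, mul_zero]
  rw [heq]
  have hinj : Function.Injective (fun k : ℕ => 2*k) := fun a b h => by
    simp only at h; omega
  have hsupp : Function.support (fun r : ℕ => ∫ x : ℝ, F r x)
      ⊆ Set.range (fun k : ℕ => 2*k) := by
    intro r hr
    rcases Nat.even_or_odd r with he | ho
    · obtain ⟨m, hm⟩ := he
      exact ⟨m, by simp only; omega⟩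
    · exact (hr (hIodd r ho)).elim
  rw [← Function.Injective.tsum_eq hinj hsupp, tsum_congr hIeven, tsum_mul_left]
end

section
/- Let m ≥ 1 be a natural number and x > 0 a real number. Then the integral ∫₀^∞ t^m e^{−xt} / (1 − e^{−t}) dt converges and the polygamma function satisfies ψ^{(m)}(x) = (−1)^{m+1} ∫₀^∞ t^m e^{−xt} / (1 − e^{−t}) dt. -/
open MeasureTheory Set Filter Topology Real

noncomputable def polS (k : ℕ) (y : ℝ) : ℝ := ∑' j : ℕ, ((y + j) ^ k)⁻¹

lemma min_mul_le_add {a : ℝ} (ha : 0 < a) (j : ℕ) :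
    min a 1 * (j + 1) ≤ a + j := by
  have hj : (0:ℝ) ≤ j := j.cast_nonneg
  rcases min_le_iff.mp (le_refl (min a 1)) with h | h
  all_goals rcases le_total a 1 with h1 | h1
  · rw [min_eq_left h1]; nlinarith
  · rw [min_eq_right h1]; nlinarith
  · rw [min_eq_left h1]; nlinarith
  · rw [min_eq_right h1]; nlinarith

lemma add_pos_nat {a : ℝ} (ha : 0 < a) (j : ℕ) : 0 < a + j := by positivity

lemma summable_polS {k : ℕ} (hk : 2 ≤ k) {y : ℝ} (hy : 0 < y) :
    Summable (fun j : ℕ => ((y + j) ^ k)⁻¹) := by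
  have hmin : 0 < min y 1 := lt_min hy one_pos
  have hsum : Summable (fun j : ℕ => (min y 1)⁻¹ ^ k * (((j:ℝ) + 1) ^ k)⁻¹) := by
    apply Summable.mul_left
    have : Summable (fun j : ℕ => (((j:ℝ)) ^ k)⁻¹) :=
      Real.summable_nat_pow_inv.mpr (by omega)
    have := (summable_nat_add_iff 1).mpr this
    simpa using this
  refine Summable.of_nonneg_of_le (fun j => by positivity) (fun j => ?_) hsum
  have h1 : 0 < min y 1 * (j + 1) := by positivity
  have h2 : min y 1 * (j + 1) ≤ y + j := min_mul_le_add hy j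
  have h3 : ((y + (j:ℝ)))⁻¹ ≤ (min y 1 * (j + 1))⁻¹ := by
    apply inv_anti₀ h1 h2
  calc ((y + (j:ℝ)) ^ k)⁻¹ = ((y + (j:ℝ))⁻¹) ^ k := by rw [inv_pow]
    _ ≤ ((min y 1 * (j + 1))⁻¹) ^ k := by
        exact pow_le_pow_left₀ (by positivity) h3 k
    _ = (min y 1)⁻¹ ^ k * (((j:ℝ) + 1) ^ k)⁻¹ := by
        rw [mul_inv, mul_pow, inv_pow, inv_pow]

lemma tlu_aux {F : ℕ → ℝ → ℝ} {g : ℝ → ℝ}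
    (h : ∀ y : ℝ, 0 < y → TendstoUniformlyOn F g atTop (Ioi (y/2))) :
    TendstoLocallyUniformlyOn F g atTop (Ioi 0) := by
  intro u hu y hy
  have hy' : (0:ℝ) < y := hy
  exact ⟨Ioi (y/2), mem_nhdsWithin_of_mem_nhds (Ioi_mem_nhds (by linarith)),
    h y hy' u hu⟩

lemma hasDerivAt_polS {k : ℕ} (hk : 2 ≤ k) {x : ℝ} (hx : 0 < x) :
    HasDerivAt (polS k) (-(k : ℝ) * polS (k+1) x) x := by
  obtain ⟨l, rfl⟩ : ∃ l, k = l + 2 := ⟨k - 2, by omega⟩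
  set k := l + 2
  have hF : ∀ n : ℕ, ∀ y ∈ Ioi (0:ℝ), HasDerivAt
      (fun z => ∑ j ∈ Finset.range n, ((z + (j:ℝ)) ^ k)⁻¹)
      (∑ j ∈ Finset.range n, -(k:ℝ) * ((y + (j:ℝ)) ^ (k+1))⁻¹) y := by
    intro n y hy
    apply HasDerivAt.fun_sum
    intro j _
    have hz : (0:ℝ) < y + j := add_pos_nat hy j
    have h1 : HasDerivAt (fun z : ℝ => z + (j:ℝ)) 1 y := (hasDerivAt_id y).add_const _
    have h2 := (h1.pow k).inv (pow_ne_zero k hz.ne')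
    refine h2.congr_deriv ?_
    simp only [Pi.pow_apply, k, show l + 2 - 1 = l + 1 by omega]
    field_simp
    ring
  have hTLU : TendstoLocallyUniformlyOn
      (fun n y => ∑ j ∈ Finset.range n, -(k:ℝ) * ((y + (j:ℝ)) ^ (k+1))⁻¹)
      (fun y => ∑' j : ℕ, -(k:ℝ) * ((y + (j:ℝ)) ^ (k+1))⁻¹) atTop (Ioi 0) := by
    apply tlu_aux
    intro y hy
    apply tendstoUniformlyOn_tsum_nat
      (u := fun j => (k:ℝ) * ((y/2 + (j:ℝ)) ^ (k+1))⁻¹)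
      ((summable_polS (by omega) (by linarith)).mul_left _)
    intro j z hz
    have hz2 : y/2 < z := hz
    have h0 : (0:ℝ) < y/2 + j := add_pos_nat (by linarith) j
    rw [norm_mul, norm_neg, norm_inv, Real.norm_natCast, norm_pow, Real.norm_eq_abs,
      abs_of_pos (by linarith : (0:ℝ) < z + j)]
    gcongr
    all_goals first | exact h0.le | linarith
  have hpt : ∀ y ∈ Ioi (0:ℝ), Tendsto
      (fun n => ∑ j ∈ Finset.range n, ((y + (j:ℝ)) ^ k)⁻¹) atTop (𝓝 (polS k y)) :=
    fun y hy => (summable_polS hk hy).hasSum.tendsto_sum_nat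
  have := hasDerivAt_of_tendstoLocallyUniformlyOn isOpen_Ioi hTLU
    (Filter.Eventually.of_forall hF) hpt hx
  refine this.congr_deriv ?_
  rw [polS, ← tsum_mul_left]

lemma summable_shift2 : Summable (fun j : ℕ => (((j:ℝ) + 1) ^ 2)⁻¹) := by
  have h1 : Summable (fun n : ℕ => ((n : ℝ) ^ 2)⁻¹) :=
    Real.summable_nat_pow_inv.mpr one_lt_two
  have := (summable_nat_add_iff 1).mpr h1
  simpa using this

lemma e_bound {a b y : ℝ} (ha : 0 < a) (hy1 : a ≤ y) (hy2 : y ≤ b) (j : ℕ) :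
    |(y + (j:ℝ))⁻¹ - ((j:ℝ) + 1)⁻¹| ≤ ((1 + b) * (min a 1)⁻¹) * (((j:ℝ) + 1) ^ 2)⁻¹ := by
  have hy : 0 < y := lt_of_lt_of_le ha hy1
  have hyj : (0:ℝ) < y + j := add_pos_nat hy j
  have hj1 : (0:ℝ) < (j:ℝ) + 1 := by positivity
  have hmin : 0 < min a 1 := lt_min ha one_pos
  have heq : (y + (j:ℝ))⁻¹ - ((j:ℝ) + 1)⁻¹ = (1 - y) / ((y + j) * ((j:ℝ) + 1)) := by
    field_simp
    ring
  rw [heq, abs_div, abs_of_pos (show (0:ℝ) < (y + ↑j) * ((j:ℝ) + 1) from mul_pos hyj hj1)]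
  have h1 : |1 - y| ≤ 1 + b := abs_le.mpr ⟨by linarith, by linarith⟩
  have h2 : min a 1 * ((j:ℝ) + 1) ^ 2 ≤ (y + j) * ((j:ℝ) + 1) := by
    have := min_mul_le_add ha j
    nlinarith [min_le_left a 1]
  calc |1 - y| / ((y + j) * ((j:ℝ) + 1))
      ≤ (1 + b) / (min a 1 * ((j:ℝ) + 1) ^ 2) :=
        div_le_div₀ (by linarith) h1 (by positivity) h2
    _ = ((1 + b) * (min a 1)⁻¹) * (((j:ℝ) + 1) ^ 2)⁻¹ := by
        rw [div_eq_mul_inv, mul_inv]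
        ring

lemma summable_e {y : ℝ} (hy : 0 < y) :
    Summable (fun j : ℕ => (y + (j:ℝ))⁻¹ - ((j:ℝ) + 1)⁻¹) := by
  apply Summable.of_norm
  refine Summable.of_nonneg_of_le (fun j => norm_nonneg _)
    (fun j => ?_) ((summable_shift2.mul_left ((1 + y) * (min y 1)⁻¹)))
  simpa using e_bound hy le_rfl le_rfl j

noncomputable def digam (y : ℝ) : ℝ :=
  -Real.eulerMascheroniConstant - ∑' j : ℕ, ((y + (j:ℝ))⁻¹ - ((j:ℝ) + 1)⁻¹)

noncomputable def dSeq (n : ℕ) (y : ℝ) : ℝ :=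
  Real.log n - ∑ j ∈ Finset.range (n + 1), (y + (j:ℝ))⁻¹

lemma dSeq_eq (n : ℕ) (y : ℝ) :
    dSeq n y = (Real.log n - (harmonic (n+1) : ℝ))
      - ∑ j ∈ Finset.range (n + 1), ((y + (j:ℝ))⁻¹ - ((j:ℝ) + 1)⁻¹) := by
  have hh : (harmonic (n+1) : ℝ) = ∑ j ∈ Finset.range (n + 1), ((j:ℝ) + 1)⁻¹ := by
    rw [harmonic]
    push_cast
    rfl
  rw [dSeq, hh, Finset.sum_sub_distrib]
  ring

lemma tendsto_cSeq :
    Tendsto (fun n : ℕ => Real.log n - (harmonic (n+1) : ℝ)) atTop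
      (𝓝 (-Real.eulerMascheroniConstant)) := by
  have h1 : Tendsto (fun n : ℕ => (harmonic (n+1) : ℝ) - Real.log (n+1)) atTop
      (𝓝 Real.eulerMascheroniConstant) := by
    have := Real.tendsto_harmonic_sub_log.comp (tendsto_add_atTop_nat 1)
    apply this.congr
    intro n
    show (harmonic (n+1) : ℝ) - Real.log (↑(n+1)) = _
    push_cast
    ring
  have h2 : Tendsto (fun n : ℕ => Real.log ((n:ℝ)+1) - Real.log n) atTop (𝓝 0) := by
    have ha : Tendsto (fun n : ℕ => 1 + (n:ℝ)⁻¹) atTop (𝓝 1) := by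
      simpa using (tendsto_const_nhds (x := (1:ℝ))).add tendsto_inv_atTop_nhds_zero_nat
    have hb : Tendsto (fun n : ℕ => Real.log (1 + (n:ℝ)⁻¹)) atTop (𝓝 0) := by
      have := (Real.continuousAt_log one_ne_zero).tendsto.comp ha
      simpa [Function.comp_def] using this
    apply hb.congr'
    filter_upwards [eventually_ge_atTop 1] with n hn
    have hn' : (0:ℝ) < n := by exact_mod_cast hn
    rw [← Real.log_div (by positivity) hn'.ne']
    congr 1
    field_simp
  have h3 := (h1.add h2).neg
  rw [show -(Real.eulerMascheroniConstant + 0) = -Real.eulerMascheroniConstant by ring] at h3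
  apply h3.congr
  intro n
  ring

lemma tuo_shift {F : ℕ → ℝ → ℝ} {g : ℝ → ℝ} {s : Set ℝ}
    (h : TendstoUniformlyOn F g atTop s) :
    TendstoUniformlyOn (fun n => F (n + 1)) g atTop s :=
  fun u hu => (tendsto_add_atTop_nat 1).eventually (h u hu)

lemma tuo_const {c : ℕ → ℝ} {L : ℝ} {s : Set ℝ} (h : Tendsto c atTop (𝓝 L)) :
    TendstoUniformlyOn (fun n (_ : ℝ) => c n) (fun _ => L) atTop s := by
  rw [Metric.tendstoUniformlyOn_iff]
  intro ε hε
  filter_upwards [Metric.tendsto_nhds.mp h ε hε] with n hn y _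
  simpa [dist_comm] using hn

lemma tendsto_dSeq {y : ℝ} (hy : 0 < y) :
    Tendsto (fun n => dSeq n y) atTop (𝓝 (digam y)) := by
  simp only [dSeq_eq]
  have h1 := tendsto_cSeq
  have h2 : Tendsto (fun n : ℕ => ∑ j ∈ Finset.range (n + 1),
      ((y + (j:ℝ))⁻¹ - ((j:ℝ) + 1)⁻¹)) atTop
      (𝓝 (∑' j : ℕ, ((y + (j:ℝ))⁻¹ - ((j:ℝ) + 1)⁻¹))) :=
    ((summable_e hy).hasSum.tendsto_sum_nat).comp (tendsto_add_atTop_nat 1)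
  exact h1.sub h2

lemma tlu_dSeq : TendstoLocallyUniformlyOn dSeq digam atTop (Ioi 0) := by
  intro u hu y hy
  have hy' : (0:ℝ) < y := hy
  refine ⟨Ioo (y/2) (y+1), mem_nhdsWithin_of_mem_nhds
    (Ioo_mem_nhds (by linarith) (by linarith)), ?_⟩
  have hE : TendstoUniformlyOn
      (fun n z => ∑ j ∈ Finset.range n, ((z + (j:ℝ))⁻¹ - ((j:ℝ) + 1)⁻¹))
      (fun z => ∑' j : ℕ, ((z + (j:ℝ))⁻¹ - ((j:ℝ) + 1)⁻¹)) atTop (Ioo (y/2) (y+1)) := by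
    apply tendstoUniformlyOn_tsum_nat
      (u := fun j => ((1 + (y+1)) * (min (y/2) 1)⁻¹) * (((j:ℝ) + 1) ^ 2)⁻¹)
      (summable_shift2.mul_left _)
    intro j z hz
    have := e_bound (show (0:ℝ) < y/2 by linarith) hz.1.le hz.2.le j
    simpa using this
  have hC := tuo_const (s := Ioo (y/2) (y+1)) tendsto_cSeq
  have := hC.sub (tuo_shift hE)
  have h2 : TendstoUniformlyOn dSeq digam atTop (Ioo (y/2) (y+1)) := by
    apply this.congr
    filter_upwards with n
    intro z _
    rw [dSeq_eq]
    rfl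
  exact h2 u hu

lemma hasDerivAt_logGamma {x : ℝ} (hx : 0 < x) :
    HasDerivAt (fun y : ℝ => Real.log (Real.Gamma y)) (digam x) x := by
  apply hasDerivAt_of_tendstoLocallyUniformlyOn isOpen_Ioi tlu_dSeq
    (f := fun n y => Real.BohrMollerup.logGammaSeq y n) ?_ ?_ hx
  · filter_upwards with n
    intro y hy
    have hy' : (0:ℝ) < y := hy
    have hsum : HasDerivAt (fun z : ℝ => ∑ j ∈ Finset.range (n+1), Real.log (z + (j:ℝ)))
        (∑ j ∈ Finset.range (n+1), (y + (j:ℝ))⁻¹) y := by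
      apply HasDerivAt.fun_sum
      intro j _
      have h1 : HasDerivAt (fun z : ℝ => z + (j:ℝ)) 1 y := (hasDerivAt_id y).add_const _
      have := h1.log (add_pos_nat hy' j).ne'
      simpa using this
    have h2 : HasDerivAt (fun z : ℝ => z * Real.log n + Real.log (Nat.factorial n))
        (Real.log n) y := by
      simpa using ((hasDerivAt_id y).mul_const (Real.log n)).add_const (Real.log (Nat.factorial n))
    have h3 := h2.sub hsum
    simpa [Real.BohrMollerup.logGammaSeq, dSeq, Pi.sub_def] using h3
  · intro y hy
    exact Real.BohrMollerup.tendsto_log_gamma hy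

lemma hasDerivAt_digam {x : ℝ} (hx : 0 < x) :
    HasDerivAt digam (polS 2 x) x := by
  apply hasDerivAt_of_tendstoLocallyUniformlyOn (l := atTop) isOpen_Ioi
    (f := dSeq)
    (f' := fun n y => ∑ j ∈ Finset.range (n+1), ((y + (j:ℝ)) ^ 2)⁻¹)
    ?_ ?_ ?_ hx
  · apply tlu_aux
    intro y hy
    apply tuo_shift (F := fun n y => ∑ j ∈ Finset.range n, ((y + (j:ℝ)) ^ 2)⁻¹)
      (g := polS 2)
    apply tendstoUniformlyOn_tsum_nat
      (u := fun j => ((y/2 + (j:ℝ)) ^ 2)⁻¹)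
      (summable_polS le_rfl (by linarith))
    intro j z hz
    have hz2 : y/2 < z := hz
    have h0 : (0:ℝ) < y/2 + j := add_pos_nat (by linarith) j
    rw [norm_inv, norm_pow, Real.norm_eq_abs, abs_of_pos (by linarith : (0:ℝ) < z + j)]
    gcongr
    all_goals first | exact h0.le | linarith
  · filter_upwards with n
    intro y hy
    have hy' : (0:ℝ) < y := hy
    have hsum : HasDerivAt (fun z : ℝ => ∑ j ∈ Finset.range (n+1), (z + (j:ℝ))⁻¹)
        (∑ j ∈ Finset.range (n+1), -((y + (j:ℝ)) ^ 2)⁻¹) y := by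
      apply HasDerivAt.fun_sum
      intro j _
      have h1 : HasDerivAt (fun z : ℝ => z + (j:ℝ)) 1 y := (hasDerivAt_id y).add_const _
      have h2 := h1.inv (add_pos_nat hy' j).ne'
      have : (-1 : ℝ) / (y + (j:ℝ)) ^ 2 = -((y + (j:ℝ)) ^ 2)⁻¹ := by ring
      exact h2.congr_deriv (by ring)
    have h2 := hsum.const_sub (Real.log n)
    have h3 : -∑ j ∈ Finset.range (n+1), -((y + (j:ℝ)) ^ 2)⁻¹
        = ∑ j ∈ Finset.range (n+1), ((y + (j:ℝ)) ^ 2)⁻¹ := by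
      rw [← Finset.sum_neg_distrib]
      simp
    rw [h3] at h2
    exact h2
  · intro y hy
    exact tendsto_dSeq hy

lemma iteratedDeriv_logGamma (m : ℕ) : ∀ x : ℝ, 0 < x →
    iteratedDeriv (m+2) (fun y : ℝ => Real.log (Real.Gamma y)) x
      = (-1)^m * (m+1).factorial * polS (m+2) x := by
  induction m with
  | zero =>
    intro x hx
    have h1 : Set.EqOn (deriv fun y : ℝ => Real.log (Real.Gamma y)) digam (Ioi 0) :=
      fun y hy => (hasDerivAt_logGamma hy).deriv
    have h2 : iteratedDeriv 2 (fun y : ℝ => Real.log (Real.Gamma y)) x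
        = deriv digam x := by
      rw [iteratedDeriv_succ, iteratedDeriv_one]
      apply Filter.EventuallyEq.deriv_eq
      filter_upwards [Ioi_mem_nhds hx] with z hz using h1 hz
    rw [h2, (hasDerivAt_digam hx).deriv]
    norm_num
  | succ m ih =>
    intro x hx
    have heq : (iteratedDeriv (m+2) (fun y : ℝ => Real.log (Real.Gamma y)))
        =ᶠ[𝓝 x] fun y => (-1)^m * ((m+1).factorial : ℝ) * polS (m+2) y := by
      filter_upwards [Ioi_mem_nhds hx] with z hz using ih z hz
    have hD := (hasDerivAt_polS (k := m+2) (by omega) hx).const_mul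
      ((-1:ℝ)^m * ((m+1).factorial : ℝ))
    rw [show m+1+2 = (m+2)+1 from rfl, iteratedDeriv_succ, heq.deriv_eq, hD.deriv]
    push_cast [Nat.factorial_succ]
    ring

lemma int_pow_exp_integrable (m : ℕ) {c : ℝ} (hc : 0 < c) :
    IntegrableOn (fun t : ℝ => t ^ m * Real.exp (-c * t)) (Ioi 0) := by
  have h := integrableOn_rpow_mul_exp_neg_mul_rpow
    (s := (m:ℝ)) (p := 1) (b := c)
    (lt_of_lt_of_le neg_one_lt_zero (Nat.cast_nonneg m)) one_pos hc
  apply h.congr_fun ?_ measurableSet_Ioi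
  intro t ht
  simp [Real.rpow_one, Real.rpow_natCast]

lemma int_pow_exp_value (m : ℕ) {c : ℝ} (hc : 0 < c) :
    ∫ t in Ioi (0:ℝ), t ^ m * Real.exp (-c * t)
      = (m.factorial : ℝ) * ((c ^ (m+1))⁻¹) := by
  have h := Real.integral_rpow_mul_exp_neg_mul_Ioi (a := (m:ℝ)+1) (r := c)
    (by positivity) hc
  have h2 : ∫ t in Ioi (0:ℝ), t ^ m * Real.exp (-c * t)
      = ∫ t in Ioi (0:ℝ), t ^ (((m:ℝ)+1)-1) * Real.exp (-(c * t)) := by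
    apply setIntegral_congr_fun measurableSet_Ioi
    intro t ht
    show t ^ m * Real.exp (-c * t) = t ^ (((m:ℝ)+1)-1) * Real.exp (-(c * t))
    rw [add_sub_cancel_right, Real.rpow_natCast, neg_mul]
  rw [h2, h]
  rw [show ((m:ℝ)+1) = ((m+1 : ℕ) : ℝ) by push_cast; ring]
  rw [Real.rpow_natCast, show ((m+1:ℕ):ℝ) = (m:ℝ)+1 by push_cast; ring,
    Real.Gamma_nat_eq_factorial, one_div, inv_pow]
  ring

lemma integral_rep {m : ℕ} (hm : 1 ≤ m) {x : ℝ} (hx : 0 < x) :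
    IntegrableOn (fun t : ℝ => t ^ m * Real.exp (-x * t) / (1 - Real.exp (-t))) (Ioi 0) ∧
    ∫ t in Ioi (0:ℝ), t ^ m * Real.exp (-x * t) / (1 - Real.exp (-t))
      = (m.factorial : ℝ) * polS (m+1) x := by
  set F : ℝ → ℝ := fun t => t ^ m * Real.exp (-x * t) / (1 - Real.exp (-t)) with hF
  set f : ℕ → ℝ → ℝ := fun n t => t ^ m * Real.exp (-(x + n) * t) with hf
  have hmeas : ∀ n, Measurable (f n) := fun n =>
    (measurable_id.pow_const m).mul ((measurable_id.const_mul _).exp)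
  have hFmeas : Measurable F := ((measurable_id.pow_const m).mul
    ((measurable_id.const_mul _).exp)).div (measurable_const.sub measurable_id.neg.exp)
  have hexplt : ∀ t : ℝ, t ∈ Ioi (0:ℝ) → Real.exp (-t) < 1 := by
    intro t ht
    have ht' : (0:ℝ) < t := ht
    rw [← Real.exp_zero]
    exact Real.exp_lt_exp.mpr (by linarith)
  have hfnn : ∀ n, ∀ t ∈ Ioi (0:ℝ), 0 ≤ f n t := by
    intro n t ht
    have ht' : (0:ℝ) < t := ht
    have := Real.exp_nonneg (-(x + n) * t)
    positivity
  have hterm : ∀ t ∈ Ioi (0:ℝ), ∀ n : ℕ,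
      f n t = (t ^ m * Real.exp (-x * t)) * (Real.exp (-t)) ^ n := by
    intro t ht n
    show t ^ m * Real.exp (-(x + n) * t) = _
    rw [← Real.exp_nat_mul, mul_assoc, ← Real.exp_add,
      show -(x + (n:ℝ)) * t = -x * t + (n:ℝ) * -t by ring]
  have hsummable : ∀ t ∈ Ioi (0:ℝ), Summable (fun n => f n t) := by
    intro t ht
    apply Summable.congr
      (((summable_geometric_of_lt_one (Real.exp_nonneg _)
        (hexplt t ht)).mul_left (t ^ m * Real.exp (-x * t))))
    intro n
    exact (hterm t ht n).symm
  have hkey : ∀ t ∈ Ioi (0:ℝ), F t = ∑' n : ℕ, f n t := by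
    intro t ht
    have h1 : ∑' n : ℕ, f n t
        = (t ^ m * Real.exp (-x * t)) * ∑' n : ℕ, (Real.exp (-t)) ^ n := by
      rw [← tsum_mul_left]
      exact tsum_congr (hterm t ht)
    rw [h1, tsum_geometric_of_lt_one (Real.exp_nonneg _) (hexplt t ht)]
    show _ / _ = _
    rw [div_eq_mul_inv]
  have hint : ∀ n : ℕ, IntegrableOn (f n) (Ioi 0) := by
    intro n
    exact int_pow_exp_integrable m (by positivity)
  have hval : ∀ n : ℕ, ∫ t in Ioi (0:ℝ), f n t
      = (m.factorial : ℝ) * (((x + n) ^ (m+1))⁻¹) := by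
    intro n
    exact int_pow_exp_value m (by positivity)
  have hsumc : Summable (fun n : ℕ => (m.factorial : ℝ) * (((x + n) ^ (m+1))⁻¹)) :=
    (summable_polS (by omega) hx).mul_left _
  have hnn : ∀ n, 0 ≤ᵐ[volume.restrict (Ioi (0:ℝ))] f n := fun n =>
    (ae_restrict_iff' measurableSet_Ioi).mpr (Filter.Eventually.of_forall (hfnn n))
  have hlint : ∀ n : ℕ, ∫⁻ t in Ioi (0:ℝ), ‖f n t‖₊
      = ENNReal.ofReal ((m.factorial : ℝ) * (((x + n) ^ (m+1))⁻¹)) := by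
    intro n
    have h1 : ∫⁻ t in Ioi (0:ℝ), ‖f n t‖₊ = ∫⁻ t in Ioi (0:ℝ), ENNReal.ofReal (f n t) :=
      lintegral_congr_ae ((hnn n).mono fun t ht => Real.enorm_eq_ofReal ht)
    rw [h1, ← ofReal_integral_eq_lintegral_ofReal (hint n) (hnn n), hval n]
  have hne : (∑' n : ℕ, ∫⁻ t in Ioi (0:ℝ), ‖f n t‖₊) ≠ ⊤ := by
    simp_rw [hlint]
    rw [← ENNReal.ofReal_tsum_of_nonneg (fun n => by positivity) hsumc]
    exact ENNReal.ofReal_ne_top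
  have hintF : IntegrableOn F (Ioi 0) := by
    refine ⟨hFmeas.aestronglyMeasurable, ?_⟩
    have h1 : ∫⁻ t in Ioi (0:ℝ), ‖F t‖ₑ
        = ∫⁻ t in Ioi (0:ℝ), ∑' n : ℕ, ENNReal.ofReal (f n t) := by
      apply lintegral_congr_ae
      rw [EventuallyEq, ae_restrict_iff' measurableSet_Ioi]
      apply Filter.Eventually.of_forall
      intro t ht
      have hFnn : 0 ≤ F t := by
        rw [hkey t ht]
        exact tsum_nonneg (fun n => hfnn n t ht)
      rw [Real.enorm_eq_ofReal hFnn, hkey t ht,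
        ENNReal.ofReal_tsum_of_nonneg (fun n => hfnn n t ht) (hsummable t ht)]
    rw [HasFiniteIntegral, h1,
      lintegral_tsum (fun n => ((hmeas n).ennreal_ofReal).aemeasurable)]
    have h2 : ∀ n : ℕ, ∫⁻ t in Ioi (0:ℝ), ENNReal.ofReal (f n t)
        = ENNReal.ofReal ((m.factorial : ℝ) * (((x + n) ^ (m+1))⁻¹)) := by
      intro n
      rw [← ofReal_integral_eq_lintegral_ofReal (hint n) (hnn n), hval n]
    simp_rw [h2]
    rw [← ENNReal.ofReal_tsum_of_nonneg (fun n => by positivity) hsumc]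
    exact ENNReal.ofReal_lt_top
  refine ⟨hintF, ?_⟩
  have h3 : ∫ t in Ioi (0:ℝ), F t = ∫ t in Ioi (0:ℝ), ∑' n : ℕ, f n t :=
    setIntegral_congr_fun measurableSet_Ioi hkey
  rw [h3, integral_tsum (fun n => (hmeas n).aestronglyMeasurable) hne]
  simp_rw [hval]
  rw [polS, ← tsum_mul_left]


/-- For `m ≥ 1` and `x > 0`, the polygamma function
`ψ^{(m)}(x) = ∂^{m+1}_x log Γ(x)` has the convergent integral representation
`ψ^{(m)}(x) = (-1)^{m+1} ∫₀^∞ t^m e^{-xt} / (1 - e^{-t}) dt`. -/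
theorem polygamma_integral_rep (m : ℕ) (hm : 1 ≤ m) (x : ℝ) (hx : 0 < x) :
    IntegrableOn
        (fun t : ℝ => t ^ m * Real.exp (-x * t) / (1 - Real.exp (-t))) (Ioi 0) ∧
      iteratedDeriv (m + 1) (fun y : ℝ => Real.log (Real.Gamma y)) x =
        (-1) ^ (m + 1) *
          ∫ t in Ioi (0 : ℝ), t ^ m * Real.exp (-x * t) / (1 - Real.exp (-t)) := by
  obtain ⟨l, rfl⟩ : ∃ l, m = l + 1 := ⟨m - 1, by omega⟩
  obtain ⟨hint, hval⟩ := integral_rep hm hx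
  refine ⟨hint, ?_⟩
  rw [hval, iteratedDeriv_logGamma l x hx]
  push_cast
  ring
end

section
/- Define y(x) = x · ∫₀^∞ e^{−t}/(1+xt) dt for x > 0. Then y is differentiable on (0, ∞), satisfies the Euler differential equation x² y′(x) + y(x) = x for all x > 0, and y(x) → 0 as x → 0⁺. -/
open MeasureTheory Set

/-- `y(x) = x ∫₀^∞ e^{-t}/(1+xt) dt`, the Borel resummation of the Euler series
multiplied by `x`. -/
noncomputable def eulerY (x : ℝ) : ℝ :=
  x * ∫ t in Ioi (0 : ℝ), Real.exp (-t) / (1 + x * t)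

namespace EulerYAux

open Real Filter Topology

lemma denom_pos {x t : ℝ} (hx : 0 ≤ x) (ht : 0 ≤ t) : 0 < 1 + x * t := by positivity

lemma cont_denom {x : ℝ} (hx : 0 ≤ x) :
    ContinuousOn (fun t : ℝ => Real.exp (-t) / (1 + x * t)) (Ici 0) := by
  apply ContinuousOn.div (Continuous.continuousOn (by continuity))
    (Continuous.continuousOn (by continuity))
  intro t ht
  exact (denom_pos hx ht).ne'

lemma cont_denom2 {x : ℝ} (hx : 0 ≤ x) :
    ContinuousOn (fun t : ℝ => Real.exp (-t) / (1 + x * t) ^ 2) (Ici 0) := by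
  apply ContinuousOn.div (Continuous.continuousOn (by continuity))
    (Continuous.continuousOn (by continuity))
  intro t ht
  exact pow_ne_zero 2 (denom_pos hx ht).ne'

lemma cont_denom3 {x : ℝ} (hx : 0 ≤ x) :
    ContinuousOn (fun t : ℝ => t * Real.exp (-t) / (1 + x * t) ^ 2) (Ici 0) := by
  apply ContinuousOn.div (Continuous.continuousOn (by continuity))
    (Continuous.continuousOn (by continuity))
  intro t ht
  exact pow_ne_zero 2 (denom_pos hx ht).ne'

lemma int_exp : IntegrableOn (fun t : ℝ => Real.exp (-t)) (Ioi 0) := by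
  simpa using exp_neg_integrableOn_Ioi 0 one_pos

lemma int_t_exp : IntegrableOn (fun t : ℝ => t * Real.exp (-t)) (Ioi 0) := by
  have h := Real.GammaIntegral_convergent (by norm_num : (0:ℝ) < 2)
  refine h.congr_fun (fun t ht => ?_) measurableSet_Ioi
  rw [show (2:ℝ) - 1 = 1 by norm_num]; beta_reduce; rw [Real.rpow_one]; ring

lemma intF {x : ℝ} (hx : 0 ≤ x) :
    IntegrableOn (fun t : ℝ => Real.exp (-t) / (1 + x * t)) (Ioi 0) := by
  refine Integrable.mono' int_exp
    (((cont_denom hx).mono Ioi_subset_Ici_self).aestronglyMeasurable measurableSet_Ioi) ?_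
  filter_upwards [ae_restrict_mem measurableSet_Ioi] with t ht
  have h1 : (0:ℝ) < 1 + x * t := denom_pos hx (le_of_lt ht)
  rw [Real.norm_eq_abs, abs_div, abs_of_pos (exp_pos _), abs_of_pos h1]
  rw [div_le_iff₀ h1]
  nlinarith [exp_pos (-t), mul_nonneg hx (le_of_lt ht), (exp_pos (-t)).le]

lemma intG {x : ℝ} (hx : 0 ≤ x) :
    IntegrableOn (fun t : ℝ => Real.exp (-t) / (1 + x * t) ^ 2) (Ioi 0) := by
  refine Integrable.mono' int_exp
    (((cont_denom2 hx).mono Ioi_subset_Ici_self).aestronglyMeasurable measurableSet_Ioi) ?_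
  filter_upwards [ae_restrict_mem measurableSet_Ioi] with t ht
  have h1 : (0:ℝ) < 1 + x * t := denom_pos hx (le_of_lt ht)
  have h2 : (1:ℝ) ≤ (1 + x * t) ^ 2 := by nlinarith [mul_nonneg hx (le_of_lt ht)]
  rw [Real.norm_eq_abs, abs_div, abs_of_pos (exp_pos _), abs_of_pos (by positivity)]
  rw [div_le_iff₀ (by positivity)]
  nlinarith [(exp_pos (-t)).le]

lemma intH {x : ℝ} (hx : 0 ≤ x) :
    IntegrableOn (fun t : ℝ => t * Real.exp (-t) / (1 + x * t) ^ 2) (Ioi 0) := by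
  refine Integrable.mono' int_t_exp
    (((cont_denom3 hx).mono Ioi_subset_Ici_self).aestronglyMeasurable measurableSet_Ioi) ?_
  filter_upwards [ae_restrict_mem measurableSet_Ioi] with t ht
  have ht' : (0:ℝ) < t := ht
  have h1 : (0:ℝ) < 1 + x * t := denom_pos hx ht'.le
  have h2 : (1:ℝ) ≤ (1 + x * t) ^ 2 := by nlinarith [mul_nonneg hx ht'.le]
  rw [Real.norm_eq_abs, abs_div, abs_of_pos (by positivity), abs_of_pos (by positivity)]
  rw [div_le_iff₀ (by positivity)]
  nlinarith [mul_pos ht' (exp_pos (-t))]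

lemma hasDerivAt_exp_neg (t : ℝ) :
    HasDerivAt (fun s : ℝ => Real.exp (-s)) (-Real.exp (-t)) t := by
  simpa using (hasDerivAt_neg' t).exp

/-- The key FTC identity: `F + x G = 1`. -/
lemma F_add_xG {x : ℝ} (hx : 0 < x) :
    (∫ t in Ioi (0:ℝ), Real.exp (-t) / (1 + x * t))
      + x * ∫ t in Ioi (0:ℝ), Real.exp (-t) / (1 + x * t) ^ 2 = 1 := by
  set f : ℝ → ℝ := fun t => -Real.exp (-t) / (1 + x * t) with hf
  set f' : ℝ → ℝ := fun t => Real.exp (-t) / (1 + x * t)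
      + x * (Real.exp (-t) / (1 + x * t) ^ 2) with hf'
  have hderiv : ∀ t ∈ Ici (0:ℝ), HasDerivAt f (f' t) t := by
    intro t ht
    have h1 : (0:ℝ) < 1 + x * t := denom_pos hx.le ht
    have hd : HasDerivAt (fun s : ℝ => 1 + x * s) x t := by
      simpa using ((hasDerivAt_id t).const_mul x).const_add 1
    have := ((hasDerivAt_exp_neg t).neg).div hd h1.ne'
    refine this.congr_deriv ?_
    simp only [hf', Pi.neg_apply]
    field_simp
    ring
  have hint : IntegrableOn f' (Ioi 0) :=
    (intF hx.le).add ((intG hx.le).const_mul x)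
  have htend : Tendsto f atTop (𝓝 0) := by
    apply squeeze_zero_norm' (a := fun t => Real.exp (-t))
    · filter_upwards [eventually_ge_atTop (0:ℝ)] with t ht
      have h1 : (0:ℝ) < 1 + x * t := denom_pos hx.le ht
      have h2 : (1:ℝ) ≤ 1 + x * t := by nlinarith [mul_nonneg hx.le ht]
      rw [hf, Real.norm_eq_abs, abs_div, abs_neg, abs_of_pos (exp_pos _), abs_of_pos h1,
        div_le_iff₀ h1]
      nlinarith [(exp_pos (-t)).le]
    · exact Real.tendsto_exp_neg_atTop_nhds_zero
  have key := integral_Ioi_of_hasDerivAt_of_tendsto' hderiv hint htend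
  have hf0 : f 0 = -1 := by simp [hf]
  rw [hf0] at key
  rw [MeasureTheory.integral_add (intF hx.le) ((intG hx.le).const_mul x)] at key
  rw [MeasureTheory.integral_const_mul] at key
  linarith [key]

/-- `x H = F - G`. -/
lemma xH_eq {x : ℝ} (hx : 0 < x) :
    x * (∫ t in Ioi (0:ℝ), t * Real.exp (-t) / (1 + x * t) ^ 2)
      = (∫ t in Ioi (0:ℝ), Real.exp (-t) / (1 + x * t))
        - ∫ t in Ioi (0:ℝ), Real.exp (-t) / (1 + x * t) ^ 2 := by
  rw [← MeasureTheory.integral_const_mul, ← MeasureTheory.integral_sub (intF hx.le) (intG hx.le)]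
  apply setIntegral_congr_fun measurableSet_Ioi
  intro t ht
  have h1 : (0:ℝ) < 1 + x * t := denom_pos hx.le (le_of_lt ht)
  field_simp
  ring

set_option maxHeartbeats 1000000 in
/-- Differentiating under the integral sign. -/
lemma hasDerivAt_F {x : ℝ} (hx : 0 < x) :
    HasDerivAt (fun y : ℝ => ∫ t in Ioi (0:ℝ), Real.exp (-t) / (1 + y * t))
      (∫ t in Ioi (0:ℝ), -(t * Real.exp (-t) / (1 + x * t) ^ 2)) x := by
  have hx2 : 0 < x / 2 := by linarith
  have hmeas : ∀ᶠ y in 𝓝 x, AEStronglyMeasurable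
      (fun t : ℝ => Real.exp (-t) / (1 + y * t)) (volume.restrict (Ioi 0)) := by
    filter_upwards [eventually_gt_nhds hx] with y hy
    exact ((cont_denom hy.le).mono Ioi_subset_Ici_self).aestronglyMeasurable measurableSet_Ioi
  have hF'meas : AEStronglyMeasurable
      (fun t : ℝ => -(t * Real.exp (-t) / (1 + x * t) ^ 2)) (volume.restrict (Ioi 0)) :=
    (((cont_denom3 hx.le).mono Ioi_subset_Ici_self).aestronglyMeasurable
      measurableSet_Ioi).neg
  have hball : ∀ y ∈ Metric.ball x (x / 2), 0 < y := by
    intro y hy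
    rw [Metric.mem_ball, Real.dist_eq, abs_lt] at hy
    linarith [hy.1]
  have h_bound : ∀ᵐ t ∂(volume.restrict (Ioi (0:ℝ))), ∀ y ∈ Metric.ball x (x/2),
      ‖-(t * Real.exp (-t) / (1 + y * t) ^ 2)‖ ≤ t * Real.exp (-t) := by
    filter_upwards [ae_restrict_mem measurableSet_Ioi] with t ht y hy
    have ht' : (0:ℝ) < t := ht
    have hy' := hball y hy
    have h1 : (0:ℝ) < 1 + y * t := denom_pos hy'.le ht'.le
    have h2 : (1:ℝ) ≤ (1 + y * t) ^ 2 := by nlinarith [mul_nonneg hy'.le ht'.le]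
    rw [norm_neg, Real.norm_eq_abs, abs_div, abs_of_pos (by positivity),
      abs_of_pos (by positivity), div_le_iff₀ (by positivity)]
    nlinarith [mul_pos ht' (exp_pos (-t))]
  have h_diff : ∀ᵐ t ∂(volume.restrict (Ioi (0:ℝ))), ∀ y ∈ Metric.ball x (x/2),
      HasDerivAt (fun y : ℝ => Real.exp (-t) / (1 + y * t))
        (-(t * Real.exp (-t) / (1 + y * t) ^ 2)) y := by
    filter_upwards [ae_restrict_mem measurableSet_Ioi] with t ht y hy
    have ht' : (0:ℝ) < t := ht
    have hy' := hball y hy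
    have h1 : (0:ℝ) < 1 + y * t := denom_pos hy'.le ht'.le
    have hd : HasDerivAt (fun z : ℝ => 1 + z * t) t y := by
      simpa using ((hasDerivAt_id y).mul_const t).const_add 1
    have := (hasDerivAt_const y (Real.exp (-t))).div hd h1.ne'
    refine this.congr_deriv ?_
    field_simp
    ring
  exact (hasDerivAt_integral_of_dominated_loc_of_deriv_le
    (F := fun (y : ℝ) (t : ℝ) => Real.exp (-t) / (1 + y * t))
    (F' := fun (y : ℝ) (t : ℝ) => -(t * Real.exp (-t) / (1 + y * t) ^ 2))
    (bound := fun t : ℝ => t * Real.exp (-t))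
    (Metric.ball_mem_nhds x hx2) hmeas (intF hx.le) hF'meas h_bound int_t_exp h_diff).2

lemma hasDerivAt_eulerY {x : ℝ} (hx : 0 < x) :
    HasDerivAt eulerY (∫ t in Ioi (0:ℝ), Real.exp (-t) / (1 + x * t) ^ 2) x := by
  have h := (hasDerivAt_id x).mul (hasDerivAt_F hx)
  have : HasDerivAt eulerY
      (1 * (∫ t in Ioi (0:ℝ), Real.exp (-t) / (1 + x * t))
        + x * ∫ t in Ioi (0:ℝ), -(t * Real.exp (-t) / (1 + x * t) ^ 2)) x := by
    exact (show HasDerivAt eulerY _ x from h).congr_deriv (by simp)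
  convert this using 1
  rw [MeasureTheory.integral_neg, one_mul, mul_neg, ← sub_eq_add_neg, xH_eq hx]
  ring

lemma F_nonneg {x : ℝ} (hx : 0 ≤ x) :
    0 ≤ ∫ t in Ioi (0:ℝ), Real.exp (-t) / (1 + x * t) := by
  apply setIntegral_nonneg measurableSet_Ioi
  intro t ht
  have h1 : (0:ℝ) < 1 + x * t := denom_pos hx (le_of_lt ht)
  positivity

lemma F_le_one {x : ℝ} (hx : 0 ≤ x) :
    (∫ t in Ioi (0:ℝ), Real.exp (-t) / (1 + x * t)) ≤ 1 := by
  have h := setIntegral_mono_on (intF hx) int_exp measurableSet_Ioi (fun t ht => by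
    have h1 : (0:ℝ) < 1 + x * t := denom_pos hx (le_of_lt ht.out)
    have h2 : (1:ℝ) ≤ 1 + x * t := by nlinarith [mul_nonneg hx (le_of_lt ht.out)]
    rw [div_le_iff₀ h1]
    nlinarith [(exp_pos (-t)).le])
  calc (∫ t in Ioi (0:ℝ), Real.exp (-t) / (1 + x * t)) ≤ ∫ t in Ioi (0:ℝ), Real.exp (-t) := h
    _ = 1 := by simpa using integral_exp_neg_Ioi 0

end EulerYAux

/-- `y` is differentiable on `(0,∞)`, solves the Euler equation `x² y' + y = x`
there, and tends to `0` as `x → 0⁺`. -/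
theorem eulerY_solves_euler_ode :
    DifferentiableOn ℝ eulerY (Ioi 0) ∧
      (∀ x > (0 : ℝ), x ^ 2 * deriv eulerY x + eulerY x = x) ∧
      Filter.Tendsto eulerY (nhdsWithin 0 (Ioi 0)) (nhds 0) := by
  refine ⟨?_, ?_, ?_⟩
  · intro x hx
    exact (EulerYAux.hasDerivAt_eulerY hx).differentiableAt.differentiableWithinAt
  · intro x hx
    rw [(EulerYAux.hasDerivAt_eulerY hx).deriv, eulerY]
    have key := EulerYAux.F_add_xG hx
    nlinarith [key]
  · apply squeeze_zero_norm' (a := fun x : ℝ => x)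
    · filter_upwards [self_mem_nhdsWithin] with x hx
      have hx' : (0:ℝ) < x := hx
      rw [eulerY, Real.norm_eq_abs, abs_mul, abs_of_pos hx',
        abs_of_nonneg (EulerYAux.F_nonneg hx'.le)]
      calc x * (∫ t in Ioi (0:ℝ), Real.exp (-t) / (1 + x * t)) ≤ x * 1 :=
            mul_le_mul_of_nonneg_left (EulerYAux.F_le_one hx'.le) hx'.le
        _ = x := mul_one x
    · exact Filter.tendsto_id.mono_left nhdsWithin_le_nhds
end
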